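/- arXiv:2201.00872 — 9 statements merged into one kernel-verified Lean document; each statement's English description precedes it below -/
import Mathlib

section
/- Let A be a finite alphabet. A language L ⊆ A* belongs to B₁ if and only if L satisfies the families of ultrafilter equations E_{ab=ba}, E_{aab=abb} and E_{a=a·a} for all letters a, b ∈ A. -/
open Set

namespace Stmt0

/-- Membership in the Boolean subalgebra of `Set α` generated by a family `S`. -/
inductive GenBool {α : Type*} (S : Set (Set α)) : Set α → Prop
  | basic {s : Set α} : s ∈ S → GenBool S s
  | univ : GenBool S Set.univ
  | compl {s : Set α} : GenBool S s → GenBool S sᶜ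
  | inter {s t : Set α} : GenBool S s → GenBool S t → GenBool S (s ∩ t)

variable {A : Type*}

/-- `c_a(w)`: the set of positions of the word `w` carrying the letter `a`. -/
def contentSet (a : A) (w : List A) : Set ℕ :=
  {i | ∃ h : i < w.length, w.get ⟨i, h⟩ = a}

/-- `L_{◇^a_Q}`. -/
def diamLang (a : A) (Q : Set ℕ) : Set (List A) :=
  {w | (contentSet a w ∩ Q).Nonempty}

/-- The Boolean algebra `B₁`, as a membership predicate. -/
def B1 (A : Type*) : Set (List A) → Prop :=
  GenBool {L | ∃ (a : A) (Q : Set ℕ), L = diamLang a Q}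

/-- `A* ⊗ ℕ`. -/
abbrev Dom1 (A : Type*) : Type _ := {x : List A × ℕ // x.2 < x.1.length}

/-- `A* ⊗ ℕ²`. -/
abbrev Dom2 (A : Type*) : Type _ :=
  {x : List A × ℕ × ℕ // x.2.1 < x.1.length ∧ x.2.2 < x.1.length}

/-- `A* ⊗ ℕ³`. -/
abbrev Dom3 (A : Type*) : Type _ :=
  {x : List A × ℕ × ℕ × ℕ //
    x.2.1 < x.1.length ∧ x.2.2.1 < x.1.length ∧ x.2.2.2 < x.1.length}

/-- `f_{a,b}(w,j₁,j₂) = w(j₁→a)(j₂→b)` if `j₁ ≠ j₂`, and `w` otherwise. -/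
def f2 (a b : A) : Dom2 A → List A := fun x =>
  if x.1.2.1 ≠ x.1.2.2 then (x.1.1.set x.1.2.1 a).set x.1.2.2 b else x.1.1

/-- `f_{a,b,c}(w,j₁,j₂,j₃) = w(j₁→a)(j₂→b)(j₃→c)` if `j₁,j₂,j₃` are pairwise
distinct, and `w` otherwise. -/
def f3 (a b c : A) : Dom3 A → List A := fun x =>
  if x.1.2.1 ≠ x.1.2.2.1 ∧ x.1.2.1 ≠ x.1.2.2.2 ∧ x.1.2.2.1 ≠ x.1.2.2.2 then
    ((x.1.1.set x.1.2.1 a).set x.1.2.2.1 b).set x.1.2.2.2 c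
  else x.1.1

/-- `f_a(w,i) = w(i→a)`. -/
def f1 (a : A) : Dom1 A → List A := fun x => x.1.1.set x.1.2 a

/-- `f_a·a(w,i) = w(i→a).a`. -/
def f1app (a : A) : Dom1 A → List A := fun x => x.1.1.set x.1.2 a ++ [a]

/-- `L` satisfies the family of ultrafilter equations `E_{ab=ba}`. -/
def SatAB (L : Set (List A)) (a b : A) : Prop :=
  ∀ ν : Ultrafilter (Dom2 A),
    Ultrafilter.map (fun x => x.1.2.1) ν = Ultrafilter.map (fun x => x.1.2.2) ν →
      (f2 a b ⁻¹' L ∈ ν ↔ f2 b a ⁻¹' L ∈ ν)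

/-- `L` satisfies the family of ultrafilter equations `E_{aab=abb}`. -/
def SatAAB (L : Set (List A)) (a b : A) : Prop :=
  ∀ ν : Ultrafilter (Dom3 A),
    (Ultrafilter.map (fun x => x.1.2.1) ν = Ultrafilter.map (fun x => x.1.2.2.1) ν ∧
      Ultrafilter.map (fun x => x.1.2.2.1) ν = Ultrafilter.map (fun x => x.1.2.2.2) ν) →
      (f3 a a b ⁻¹' L ∈ ν ↔ f3 a b b ⁻¹' L ∈ ν)

/-- `L` satisfies the family of ultrafilter equations `E_{a=a·a}`. -/
def SatAA (L : Set (List A)) (a : A) : Prop :=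
  ∀ ν : Ultrafilter (Dom1 A),
    Ultrafilter.map (fun x => x.1.2) ν = Ultrafilter.map (fun x => x.1.1.length) ν →
      (f1 a ⁻¹' L ∈ ν ↔ f1app a ⁻¹' L ∈ ν)

/-!
Each generator `diamLang c Q` satisfies the three equations: the two sides of an equation agree
outside finitely many positions and carry the same set of letters on them, and an ultrafilter
with equal position projections sees these positions either all inside `Q` or all outside it.
The equations are preserved by Boolean operations.

Conversely, for a finite family `T` of sets of positions, call two positions equivalent when no
set of `T` separates them, and let the profile of a word record which letters occur in which
class. Over a finite alphabet a language saturated for equality of profiles lies in `B₁`, and two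
words with the same profile are connected by swapping letters, replacing `aab` by `abb`, and
appending a repeated letter, always within one class. If no `T` made all these moves preserve
`L`, choosing a violating move for every `T` and passing to the limit along an ultrafilter
finer than `atTop` would produce an ultrafilter violating one of the equations.
-/

open Filter

lemma ultrafilter_mem_iff_mem_iff_eventually {X : Type*} {ν : Ultrafilter X} {s t : Set X} :
    (s ∈ ν ↔ t ∈ ν) ↔ ∀ᶠ x in ν, x ∈ s ↔ x ∈ t := by
  refine ⟨fun h => ?_, congr_sets⟩
  by_cases hs : s ∈ ν
  · filter_upwards [hs, h.1 hs] with x hxs hxt using iff_of_true hxs hxt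
  · have ht : t ∉ ν := fun ht => hs (h.2 ht)
    filter_upwards [Ultrafilter.compl_mem_iff_notMem.2 hs,
      Ultrafilter.compl_mem_iff_notMem.2 ht] with x hxs hxt using iff_of_false hxs hxt

lemma eventually_forall_of_forall_map {ι X : Type*} (𝒰 : Ultrafilter ι) {E : ι → X → Prop}
    {N : Ultrafilter X → Prop} (hN : ∀ g : ι → X, (∀ᶠ i in 𝒰, E i (g i)) → N (𝒰.map g))
    {P : X → Prop} (h : ∀ ν, N ν → ∀ᶠ x in ν, P x) : ∀ᶠ i in 𝒰, ∀ x, E i x → P x := by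
  by_contra hc
  have hc' : ∀ᶠ i in 𝒰, ∃ x, E i x ∧ ¬ P x := by
    simpa only [not_forall, exists_prop] using Ultrafilter.eventually_not.2 hc
  obtain ⟨-, x₀, -⟩ := hc'.exists
  have : Nonempty X := ⟨x₀⟩
  -- pick a counterexample `g i` for each `i`; the limit of `g` along `𝒰` violates `h`
  let g i := Classical.epsilon fun x => E i x ∧ ¬ P x
  have hg : ∀ᶠ i in 𝒰, E i (g i) ∧ ¬ P (g i) := hc'.mono fun _ hi => Classical.epsilon_spec hi
  obtain ⟨i, hi, hPi⟩ := (hg.and (h _ (hN g (hg.mono fun _ hi => hi.1)))).exists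
  exact hi.2 hPi

section GenBool

variable {α : Type*} {S : Set (Set α)}

lemma GenBool.preimage_mem_iff {X : Type*} {ν : Ultrafilter X} {u v : X → α}
    (hS : ∀ s ∈ S, u ⁻¹' s ∈ ν ↔ v ⁻¹' s ∈ ν) {L : Set α} (hL : GenBool S L) :
    u ⁻¹' L ∈ ν ↔ v ⁻¹' L ∈ ν := by
  induction hL with
  | basic hs => exact hS _ hs
  | univ => simp
  | compl _ ih => simpa only [preimage_compl, Ultrafilter.compl_mem_iff_notMem] using ih.not
  | inter _ _ ih₁ ih₂ =>
    simp only [preimage_inter, ← Ultrafilter.mem_coe, inter_mem_iff] at ih₁ ih₂ ⊢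
    rw [ih₁, ih₂]

lemma GenBool.empty : GenBool S ∅ := by
  simpa using (GenBool.univ (S := S)).compl

lemma GenBool.union {s t : Set α} (hs : GenBool S s) (ht : GenBool S t) :
    GenBool S (s ∪ t) := by
  simpa [compl_inter] using (hs.compl.inter ht.compl).compl

lemma GenBool.of_forall_mem_iff {P : Set (Set α)} (hP : P.Finite) (hPS : P ⊆ S)
    {L : Set α} (hL : ∀ u v, (∀ s ∈ P, u ∈ s ↔ v ∈ s) → u ∈ L → v ∈ L) : GenBool S L := by
  induction P, hP using Set.Finite.induction_on generalizing L with
  | empty =>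
    rcases L.eq_empty_or_nonempty with rfl | ⟨u, hu⟩
    · exact .empty
    · rw [eq_univ_of_forall fun v => hL u v (by simp) hu]
      exact .univ
  | @insert s P _ _ ih =>
    -- `L` splits along `s` into two pieces, each saturated for the smaller family `P`
    let sat (M : Set α) : Set α := {v | ∃ u ∈ M, ∀ t ∈ P, u ∈ t ↔ v ∈ t}
    have hsat (M : Set α) : GenBool S (sat M) :=
      ih (fun _ hS => hPS (mem_insert_of_mem _ hS)) fun v v' hvv' ⟨u, hu, huv⟩ =>
        ⟨u, hu, fun t ht => (huv t ht).trans (hvv' t ht)⟩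
    have hLs : L = (s ∩ sat (L ∩ s)) ∪ (sᶜ ∩ sat (L \ s)) := by
      ext v
      refine ⟨fun hv => ?_, ?_⟩
      · by_cases hvs : v ∈ s
        · exact .inl ⟨hvs, v, ⟨hv, hvs⟩, fun _ _ => Iff.rfl⟩
        · exact .inr ⟨hvs, v, ⟨hv, hvs⟩, fun _ _ => Iff.rfl⟩
      · rintro (⟨hvs, u, ⟨hu, hus⟩, huv⟩ | ⟨hvs, u, ⟨hu, hus⟩, huv⟩) <;>
          refine hL u v (fun t ht => ?_) hu <;>
          rcases ht with rfl | ht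
        exacts [iff_of_true hus hvs, huv t ht, iff_of_false hus hvs, huv t ht]
    have hs : GenBool S s := .basic (hPS (mem_insert _ _))
    rw [hLs]
    exact (hs.inter (hsat _)).union (hs.compl.inter (hsat _))

end GenBool

lemma mem_diamLang_iff {c : A} {Q : Set ℕ} {w : List A} :
    w ∈ diamLang c Q ↔ ∃ p ∈ Q, w[p]? = some c := by
  simp [diamLang, contentSet, Set.Nonempty, List.getElem?_eq_some_iff, and_comm]

section SameLettersAt

variable {ι : Type*} {pos : ι → ℕ} {u v : List A}

def SameLettersAt (pos : ι → ℕ) (u v : List A) : Prop :=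
  (∀ p ∉ Set.range pos, u[p]? = v[p]?) ∧
    ∀ c : A, (∃ m, u[pos m]? = some c) ↔ ∃ m, v[pos m]? = some c

lemma SameLettersAt.symm (h : SameLettersAt pos u v) : SameLettersAt pos v u :=
  ⟨fun p hp => (h.1 p hp).symm, fun c => (h.2 c).symm⟩

lemma SameLettersAt.mem_diamLang_of_mem (h : SameLettersAt pos u v) {Q : Set ℕ}
    (hQ : ∀ m m', pos m ∈ Q → pos m' ∈ Q) {c : A}
    (hu : u ∈ diamLang c Q) : v ∈ diamLang c Q := by
  rw [mem_diamLang_iff] at hu ⊢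
  obtain ⟨p, hpQ, hup⟩ := hu
  by_cases hp : p ∈ Set.range pos
  · obtain ⟨m, rfl⟩ := hp
    obtain ⟨m', hm'⟩ := (h.2 c).1 ⟨m, hup⟩
    exact ⟨pos m', hQ m m' hpQ, hm'⟩
  · exact ⟨p, hpQ, h.1 p hp ▸ hup⟩

lemma SameLettersAt.mem_diamLang_iff (h : SameLettersAt pos u v) {Q : Set ℕ}
    (hQ : ∀ m m', pos m ∈ Q ↔ pos m' ∈ Q) (c : A) :
    u ∈ diamLang c Q ↔ v ∈ diamLang c Q :=
  ⟨h.mem_diamLang_of_mem fun m m' => (hQ m m').1,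
    h.symm.mem_diamLang_of_mem fun m m' => (hQ m m').1⟩

end SameLettersAt

lemma sameLettersAt_f2 (a b : A) (x : Dom2 A) :
    SameLettersAt ![x.1.2.1, x.1.2.2] (f2 a b x) (f2 b a x) := by
  obtain ⟨⟨w, i, j⟩, hi, hj⟩ := x
  by_cases hij : i = j
  · simp [f2, hij, SameLettersAt]
  · refine ⟨fun p hp => ?_, fun c => ?_⟩
    · simp_all [f2, eq_comm]
    · simpa [f2, hij, List.getElem?_set, Fin.exists_fin_two, hi, hj, Ne.symm hij] using or_comm

lemma sameLettersAt_f3 (a b : A) (x : Dom3 A) :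
    SameLettersAt ![x.1.2.1, x.1.2.2.1, x.1.2.2.2] (f3 a a b x) (f3 a b b x) := by
  obtain ⟨⟨w, i, j, k⟩, hi, hj, hk⟩ := x
  by_cases hijk : i ≠ j ∧ i ≠ k ∧ j ≠ k
  · obtain ⟨hij, hik, hjk⟩ := hijk
    refine ⟨fun p hp => ?_, fun c => ?_⟩
    · simp_all [f3, eq_comm]
    · simp [f3, List.getElem?_set, Fin.exists_fin_succ, hi, hj, hk, hij, hik, hjk,
        Ne.symm hij, Ne.symm hik, Ne.symm hjk]
  · simp [f3, hijk, SameLettersAt]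

lemma sameLettersAt_f1 (a : A) (x : Dom1 A) :
    SameLettersAt ![x.1.2, x.1.1.length] (f1 a x) (f1app a x) := by
  obtain ⟨⟨w, i⟩, hi⟩ := x
  refine ⟨fun p hp => ?_, fun c => ?_⟩
  · have hpw : p ≠ w.length := fun h => hp ⟨1, by simp [h]⟩
    simp only [f1, f1app, List.getElem?_append]
    split_ifs with hlt
    · rfl
    · rw [List.length_set] at hlt
      rw [List.getElem?_eq_none (by simpa using hlt), List.getElem?_eq_none (by simp; omega)]
  · simp [f1, f1app, List.getElem?_set, List.getElem?_append, Fin.exists_fin_two, hi,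
      hi.ne]

lemma eventually_forall_mem_iff {X ι : Type*} [Finite ι] {ν : Ultrafilter X}
    {pos : ι → X → ℕ} (hpos : ∀ m m', ν.map (pos m) = ν.map (pos m')) (Q : Set ℕ) :
    ∀ᶠ x in ν, ∀ m m', pos m x ∈ Q ↔ pos m' x ∈ Q := by
  refine eventually_all.2 fun m => eventually_all.2 fun m' => ?_
  refine (ultrafilter_mem_iff_mem_iff_eventually (s := pos m ⁻¹' Q) (t := pos m' ⁻¹' Q)).1 ?_
  rw [← Ultrafilter.mem_map, ← Ultrafilter.mem_map, hpos m m']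

lemma preimage_diamLang_mem_iff {X ι : Type*} [Finite ι] {ν : Ultrafilter X}
    {pos : ι → X → ℕ} (hpos : ∀ m m', ν.map (pos m) = ν.map (pos m')) {u v : X → List A}
    (huv : ∀ x, SameLettersAt (pos · x) (u x) (v x)) (c : A) (Q : Set ℕ) :
    u ⁻¹' diamLang c Q ∈ ν ↔ v ⁻¹' diamLang c Q ∈ ν := by
  rw [ultrafilter_mem_iff_mem_iff_eventually]
  filter_upwards [eventually_forall_mem_iff hpos Q] with x hx using (huv x).mem_diamLang_iff hx c

lemma satAB_diamLang (c : A) (Q : Set ℕ) (a b : A) : SatAB (diamLang c Q) a b :=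
  fun _ h => preimage_diamLang_mem_iff (pos := fun m (x : Dom2 A) => ![x.1.2.1, x.1.2.2] m)
    (by simp [Fin.forall_fin_two, h]) (sameLettersAt_f2 a b) c Q

lemma satAAB_diamLang (c : A) (Q : Set ℕ) (a b : A) : SatAAB (diamLang c Q) a b :=
  fun _ h => preimage_diamLang_mem_iff
    (pos := fun m (x : Dom3 A) => ![x.1.2.1, x.1.2.2.1, x.1.2.2.2] m)
    (by simp [Fin.forall_fin_succ, h.1, h.2]) (sameLettersAt_f3 a b) c Q

lemma satAA_diamLang (c : A) (Q : Set ℕ) (a : A) : SatAA (diamLang c Q) a :=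
  fun _ h => preimage_diamLang_mem_iff (pos := fun m (x : Dom1 A) => ![x.1.2, x.1.1.length] m)
    (by simp [Fin.forall_fin_two, h]) (sameLettersAt_f1 a) c Q

def blockOf (T : Finset (Set ℕ)) (i : ℕ) : T → Prop := fun Q => i ∈ Q.1

def profile (T : Finset (Set ℕ)) (w : List A) : A × (T → Prop) → Prop :=
  fun p => w ∈ diamLang p.1 (blockOf T ⁻¹' {p.2})

lemma b1_of_profile_saturated [Finite A] {T : Finset (Set ℕ)} {L : Set (List A)}
    (hL : ∀ u v, profile T u = profile T v → u ∈ L → v ∈ L) : B1 A L := by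
  refine GenBool.of_forall_mem_iff (Set.finite_range fun p : A × (T → Prop) =>
    diamLang p.1 (blockOf T ⁻¹' {p.2})) ?_ fun u v huv => hL u v ?_
  · rintro _ ⟨p, rfl⟩
    exact ⟨p.1, _, rfl⟩
  · exact funext fun p => propext (huv _ ⟨p, rfl⟩)

inductive Step (T : Finset (Set ℕ)) : List A → List A → Prop
  | swap (a b : A) (x : Dom2 A) :
      blockOf T x.1.2.1 = blockOf T x.1.2.2 → Step T (f2 a b x) (f2 b a x)
  | triple (a b : A) (x : Dom3 A) :
      blockOf T x.1.2.1 = blockOf T x.1.2.2.1 → blockOf T x.1.2.2.1 = blockOf T x.1.2.2.2 →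
        Step T (f3 a a b x) (f3 a b b x)
  | append (a : A) (x : Dom1 A) :
      blockOf T x.1.2 = blockOf T x.1.1.length → Step T (f1 a x) (f1app a x)

lemma set_eq_self_of_getElem? {w : List A} {i : ℕ} {a : A} (h : w[i]? = some a) :
    w.set i a = w := by
  obtain ⟨hi, rfl⟩ := List.getElem?_eq_some_iff.1 h
  exact List.set_getElem_self hi

lemma lt_length_of_getElem? {w : List A} {i : ℕ} {a : A} (h : w[i]? = some a) : i < w.length :=
  (List.getElem?_eq_some_iff.1 h).1

section Moves

variable {T : Finset (Set ℕ)} {u v : List A}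

lemma SameLettersAt.profile_eq {ι : Type*} {pos : ι → ℕ} (h : SameLettersAt pos u v)
    (hpos : ∀ m m', blockOf T (pos m) = blockOf T (pos m')) : profile T u = profile T v :=
  funext fun p => propext <| h.mem_diamLang_iff (fun m m' => by
    simp only [mem_preimage, mem_singleton_iff, hpos m m']) p.1

lemma Step.profile_eq (h : Step T u v) : profile T u = profile T v := by
  cases h with
  | swap a b x hx =>
    exact (sameLettersAt_f2 a b x).profile_eq (by simp [Fin.forall_fin_two, hx])
  | triple a b x h₁ h₂ =>
    exact (sameLettersAt_f3 a b x).profile_eq (by simp [Fin.forall_fin_succ, h₁, h₂])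
  | append a x hx =>
    exact (sameLettersAt_f1 a x).profile_eq (by simp [Fin.forall_fin_two, hx])

lemma profile_eq_of_eqvGen (h : Relation.EqvGen (Step T) u v) : profile T u = profile T v :=
  (Setoid.ker (profile T)).iseqv.eqvGen_iff.1 (h.mono fun _ _ => Step.profile_eq)

lemma step_swap {w : List A} {i j : ℕ} {a b : A} (hi : w[i]? = some a)
    (hj : w[j]? = some b) (hij : i ≠ j) (hT : blockOf T i = blockOf T j) :
    Step T w ((w.set i b).set j a) := by
  have := Step.swap a b ⟨(w, i, j), lt_length_of_getElem? hi, lt_length_of_getElem? hj⟩ hT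
  simp only [f2, ne_eq, hij, not_false_eq_true, ite_true] at this
  rwa [set_eq_self_of_getElem? hi, set_eq_self_of_getElem? hj] at this

lemma step_replace {w : List A} {i j k : ℕ} {a b : A}
    (hi : w[i]? = some a) (hj : w[j]? = some a) (hk : w[k]? = some b)
    (hij : i ≠ j) (hik : i ≠ k) (hjk : j ≠ k)
    (hTij : blockOf T i = blockOf T j) (hTjk : blockOf T j = blockOf T k) :
    Step T w (w.set j b) := by
  have := Step.triple a b ⟨(w, i, j, k), lt_length_of_getElem? hi, lt_length_of_getElem? hj,
    lt_length_of_getElem? hk⟩ hTij hTjk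
  simp only [f3, ne_eq, hij, hik, hjk, not_false_eq_true, and_self, ite_true] at this
  rwa [set_eq_self_of_getElem? hi, set_eq_self_of_getElem? hj, set_eq_self_of_getElem? hk,
    set_eq_self_of_getElem? ((List.getElem?_set_ne hjk).trans hk)] at this

lemma step_append {w : List A} {q : ℕ} {c : A} (hq : w[q]? = some c)
    (hT : blockOf T q = blockOf T w.length) : Step T w (w ++ [c]) := by
  have := Step.append c ⟨(w, q), lt_length_of_getElem? hq⟩ hT
  simp only [f1, f1app] at this
  rwa [set_eq_self_of_getElem? hq] at this

lemma exists_getElem?_of_profile_eq (h : profile T u = profile T v) {i : ℕ} {c : A}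
    (hv : v[i]? = some c) :
    ∃ j, blockOf T j = blockOf T i ∧ u[j]? = some c := by
  simpa [profile, mem_diamLang_iff] using
    (Iff.of_eq (congrFun h (c, blockOf T i))).2 (mem_diamLang_iff.2 ⟨i, rfl, hv⟩)

lemma exists_eqvGen_length_eq (h : profile T u = profile T v) (hle : u.length ≤ v.length) :
    ∃ u', Relation.EqvGen (Step T) u u' ∧ u'.length = v.length := by
  obtain ⟨n, hn⟩ := Nat.exists_eq_add_of_le hle
  induction n generalizing u with
  | zero => exact ⟨u, .refl u, hn.symm⟩
  | succ n ih =>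
    -- the letter of `v` at position `|u|` already occurs in `u` at a position of the same type
    obtain ⟨q, hq, huq⟩ := exists_getElem?_of_profile_eq h
      (List.getElem?_eq_getElem (by omega : u.length < v.length))
    have hstep := step_append huq hq
    obtain ⟨u', hu', hlen⟩ := ih (hstep.profile_eq.symm.trans h)
      (by simp only [List.length_append, List.length_singleton]; omega)
      (by simp only [List.length_append, List.length_singleton]; omega)
    exact ⟨u', .trans _ _ _ (.rel _ _ hstep) hu', hlen⟩

open Classical in
noncomputable def diffPos (u v : List A) : Finset ℕ :=
  (Finset.range u.length).filter fun i => u[i]? ≠ v[i]?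

lemma card_diffPos_lt {u v u' v' : List A} (hlen : u'.length = u.length)
    (hsub : ∀ m : ℕ, u'[m]? ≠ v'[m]? → u[m]? ≠ v[m]?) {i : ℕ} (hi : i < u.length)
    (hne : u[i]? ≠ v[i]?) (heq : u'[i]? = v'[i]?) :
    (diffPos u' v').card < (diffPos u v).card := by
  refine Finset.card_lt_card ((Finset.ssubset_iff_of_subset fun m => ?_).2
    ⟨i, by simpa [diffPos, hi] using hne, by simp [diffPos, heq]⟩)
  simp only [diffPos, Finset.mem_filter, Finset.mem_range, hlen]
  exact fun ⟨hm, h⟩ => ⟨hm, hsub m h⟩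

lemma exists_getElem?_ne_of_ne (hlen : u.length = v.length) (hne : u ≠ v) :
    ∃ (i : ℕ) (a b : A), u[i]? = some a ∧ v[i]? = some b ∧ a ≠ b := by
  obtain ⟨i, hi⟩ : ∃ i, u[i]? ≠ v[i]? := by
    by_contra! h
    exact hne (List.ext_getElem? h)
  have hiu : i < u.length := by
    by_contra! h
    exact hi (by rw [List.getElem?_eq_none h, List.getElem?_eq_none (hlen ▸ h)])
  refine ⟨i, u[i], v[i], List.getElem?_eq_getElem hiu, List.getElem?_eq_getElem (hlen ▸ hiu), ?_⟩
  rintro hab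
  exact hi (by simp [hiu, hlen ▸ hiu, hab])

lemma exists_eqvGen_card_diffPos_lt (hlen : u.length = v.length)
    (h : profile T u = profile T v) (hne : u ≠ v) :
    ∃ u' v', Relation.EqvGen (Step T) u u' ∧ Relation.EqvGen (Step T) v v' ∧
      u'.length = v'.length ∧ (diffPos u' v').card < (diffPos u v).card := by
  obtain ⟨i, a, b, hua, hvb, hab⟩ := exists_getElem?_ne_of_ne hlen hne
  have hiu := lt_length_of_getElem? hua
  have hi : u[i]? ≠ v[i]? := by
    rw [hua, hvb]
    exact fun h => hab (Option.some_injective _ h)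
  obtain ⟨j₀, hj₀, huj₀⟩ := exists_getElem?_of_profile_eq h hvb
  by_cases hdup : ∃ i₁ ≠ i, blockOf T i₁ = blockOf T i ∧ u[i₁]? = some a
  · -- a second `a` in the block of `i` lets the triple move turn `u[i]` into `b`
    obtain ⟨i₁, hi₁, hTi₁, hui₁⟩ := hdup
    have hne_of_ne {k l : ℕ} {c d : A} (hk : u[k]? = some c) (hl : u[l]? = some d)
        (hcd : c ≠ d) : k ≠ l := by
      rintro rfl
      exact hcd (Option.some_injective _ (hk.symm.trans hl))
    have hstep : Step T u (u.set i b) := step_replace hui₁ hua huj₀ hi₁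
      (hne_of_ne hui₁ huj₀ hab) (hne_of_ne hua huj₀ hab) hTi₁ hj₀.symm
    refine ⟨u.set i b, v, .rel _ _ hstep, .refl v, by simp [hlen],
      card_diffPos_lt (by simp) (fun m hm => ?_) hiu hi (by simp [hiu, hvb])⟩
    rcases eq_or_ne i m with rfl | him
    · simp [hiu, hvb] at hm
    · rwa [List.getElem?_set_ne him] at hm
  · -- otherwise `v` has an `a` in the block of `i`, which the swap move brings to position `i`
    obtain ⟨j₁, hj₁, hvj₁⟩ := exists_getElem?_of_profile_eq h.symm hua
    have hij₁ : i ≠ j₁ := by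
      rintro rfl
      exact hab (Option.some_injective _ (hvj₁.symm.trans hvb))
    have huj₁ : u[j₁]? ≠ some a := fun h' => hdup ⟨j₁, hij₁.symm, hj₁, h'⟩
    have hstep : Step T v ((v.set i a).set j₁ b) := step_swap hvb hvj₁ hij₁ hj₁.symm
    refine ⟨u, _, .refl u, .rel _ _ hstep, by simp [hlen], card_diffPos_lt rfl (fun m hm => ?_)
      hiu hi (by rw [List.getElem?_set_ne hij₁.symm, List.getElem?_set_self (hlen ▸ hiu), hua])⟩
    rcases eq_or_ne j₁ m with rfl | hjm
    · rwa [hvj₁]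
    rw [List.getElem?_set_ne hjm] at hm
    rcases eq_or_ne i m with rfl | him
    · exact hi
    · rwa [List.getElem?_set_ne him] at hm

lemma eqvGen_of_length_eq (hlen : u.length = v.length)
    (h : profile T u = profile T v) : Relation.EqvGen (Step T) u v := by
  induction hn : (diffPos u v).card using Nat.strong_induction_on generalizing u v with
  | _ n ih =>
    by_cases huv : u = v
    · exact huv ▸ .refl u
    obtain ⟨u', v', hu, hv, hlen', hlt⟩ := exists_eqvGen_card_diffPos_lt hlen h huv
    have h' : profile T u' = profile T v' :=
      (profile_eq_of_eqvGen hu).symm.trans (h.trans (profile_eq_of_eqvGen hv))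
    exact .trans _ _ _ hu (.trans _ _ _ (ih _ (hn ▸ hlt) hlen' h' rfl) (.symm _ _ hv))

theorem eqvGen_of_profile_eq
    (h : profile T u = profile T v) : Relation.EqvGen (Step T) u v := by
  wlog hle : u.length ≤ v.length generalizing u v
  · exact .symm _ _ (this h.symm (by omega))
  obtain ⟨u', hu', hlen⟩ := exists_eqvGen_length_eq h hle
  exact .trans _ _ _ hu' (eqvGen_of_length_eq hlen ((profile_eq_of_eqvGen hu').symm.trans h))

lemma mem_iff_of_eqvGen {L : Set (List A)} (hL : ∀ u v, Step T u v → (u ∈ L ↔ v ∈ L))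
    (h : Relation.EqvGen (Step T) u v) : u ∈ L ↔ v ∈ L :=
  Iff.of_eq <| (Setoid.ker (· ∈ L)).iseqv.eqvGen_iff.1 (h.mono fun u v huv => propext (hL u v huv))

end Moves

lemma map_eq_map_of_eventually_blockOf_eq {𝒰 : Ultrafilter (Finset (Set ℕ))}
    (h𝒰 : (𝒰 : Filter (Finset (Set ℕ))) ≤ atTop) {p q : Finset (Set ℕ) → ℕ}
    (h : ∀ᶠ T in 𝒰, blockOf T (p T) = blockOf T (q T)) : 𝒰.map p = 𝒰.map q := by
  refine Ultrafilter.ext fun Q => ?_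
  rw [Ultrafilter.mem_map, Ultrafilter.mem_map, ultrafilter_mem_iff_mem_iff_eventually]
  filter_upwards [h, h𝒰 (eventually_ge_atTop {Q})] with T hT hQT
  exact Iff.of_eq (congrFun hT ⟨Q, Finset.singleton_subset_iff.1 hQT⟩)

section

variable {𝒰 : Ultrafilter (Finset (Set ℕ))} {L : Set (List A)} {a b : A}

lemma eventually_f2_mem_iff (h𝒰 : (𝒰 : Filter (Finset (Set ℕ))) ≤ atTop) (h : SatAB L a b) :
    ∀ᶠ T in 𝒰, ∀ x : Dom2 A, blockOf T x.1.2.1 = blockOf T x.1.2.2 →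
      (f2 a b x ∈ L ↔ f2 b a x ∈ L) :=
  eventually_forall_of_forall_map 𝒰 (fun _ hg => by
      simp only [Ultrafilter.map_map]
      exact map_eq_map_of_eventually_blockOf_eq h𝒰 hg)
    fun ν hν => ultrafilter_mem_iff_mem_iff_eventually.1 (h ν hν)

lemma eventually_f3_mem_iff (h𝒰 : (𝒰 : Filter (Finset (Set ℕ))) ≤ atTop) (h : SatAAB L a b) :
    ∀ᶠ T in 𝒰, ∀ x : Dom3 A,
      blockOf T x.1.2.1 = blockOf T x.1.2.2.1 ∧ blockOf T x.1.2.2.1 = blockOf T x.1.2.2.2 →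
        (f3 a a b x ∈ L ↔ f3 a b b x ∈ L) :=
  eventually_forall_of_forall_map 𝒰 (fun _ hg => by
      simpa only [Ultrafilter.map_map] using
        ⟨map_eq_map_of_eventually_blockOf_eq h𝒰 (hg.mono fun _ h => h.1),
          map_eq_map_of_eventually_blockOf_eq h𝒰 (hg.mono fun _ h => h.2)⟩)
    fun ν hν => ultrafilter_mem_iff_mem_iff_eventually.1 (h ν hν)

lemma eventually_f1_mem_iff (h𝒰 : (𝒰 : Filter (Finset (Set ℕ))) ≤ atTop) (h : SatAA L a) :
    ∀ᶠ T in 𝒰, ∀ x : Dom1 A, blockOf T x.1.2 = blockOf T x.1.1.length →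
      (f1 a x ∈ L ↔ f1app a x ∈ L) :=
  eventually_forall_of_forall_map 𝒰 (fun _ hg => by
      simp only [Ultrafilter.map_map]
      exact map_eq_map_of_eventually_blockOf_eq h𝒰 hg)
    fun ν hν => ultrafilter_mem_iff_mem_iff_eventually.1 (h ν hν)

end

lemma exists_forall_step_mem_iff [Finite A] {L : Set (List A)}
    (h : ∀ a b : A, SatAB L a b ∧ SatAAB L a b ∧ SatAA L a) :
    ∃ T : Finset (Set ℕ), ∀ u v, Step T u v → (u ∈ L ↔ v ∈ L) := by
  have h𝒰 := Ultrafilter.of_le (atTop : Filter (Finset (Set ℕ)))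
  obtain ⟨T, hT⟩ := (eventually_all.2 fun a => eventually_all.2 fun b =>
    (eventually_f2_mem_iff h𝒰 (h a b).1).and
      ((eventually_f3_mem_iff h𝒰 (h a b).2.1).and (eventually_f1_mem_iff h𝒰 (h a a).2.2))).exists
  refine ⟨T, fun u v huv => ?_⟩
  cases huv with
  | swap a b x hx => exact (hT a b).1 x hx
  | triple a b x h₁ h₂ => exact (hT a b).2.1 x ⟨h₁, h₂⟩
  | append a x hx => exact (hT a a).2.2 x hx

theorem statement0_general (A : Type*) [Fintype A] (L : Set (List A)) :
    B1 A L ↔ ∀ a b : A, SatAB L a b ∧ SatAAB L a b ∧ SatAA L a := by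
  constructor
  · intro hL a b
    refine ⟨fun ν hν => hL.preimage_mem_iff ?_, fun ν hν => hL.preimage_mem_iff ?_,
      fun ν hν => hL.preimage_mem_iff ?_⟩ <;> rintro _ ⟨c, Q, rfl⟩
    exacts [satAB_diamLang c Q a b ν hν, satAAB_diamLang c Q a b ν hν, satAA_diamLang c Q a ν hν]
  · intro h
    obtain ⟨T, hT⟩ := exists_forall_step_mem_iff h
    exact b1_of_profile_saturated fun u v huv =>
      (mem_iff_of_eqvGen hT (eqvGen_of_profile_eq huv)).1

/-- A language `L ⊆ A*` belongs to `B₁` if and only if `L` satisfies the families of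
ultrafilter equations `E_{ab=ba}`, `E_{aab=abb}` and `E_{a=a·a}` for all `a, b ∈ A`. -/
theorem statement0 (A : Type*) [Fintype A] [Nonempty A] (L : Set (List A)) :
    B1 A L ↔ ∀ a b : A, SatAB L a b ∧ SatAAB L a b ∧ SatAA L a :=
  statement0_general A L

end Stmt0
end

section
/- Let A be a finite alphabet. If a language L ⊆ A* belongs to B₁, then L satisfies the families of ultrafilter equations E_{ab=ba}, E_{aab=abb} and E_{a=a·a} for all letters a, b ∈ A. -/
open Set

namespace Stmt1

/-- Membership in the Boolean subalgebra of `Set α` generated by a family `S`. -/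
inductive GenBool {α : Type*} (S : Set (Set α)) : Set α → Prop
  | basic {s : Set α} : s ∈ S → GenBool S s
  | univ : GenBool S Set.univ
  | compl {s : Set α} : GenBool S s → GenBool S sᶜ
  | inter {s t : Set α} : GenBool S s → GenBool S t → GenBool S (s ∩ t)

variable {A : Type*}

/-- `c_a(w)`: the set of positions of the word `w` carrying the letter `a`. -/
def contentSet (a : A) (w : List A) : Set ℕ :=
  {i | ∃ h : i < w.length, w.get ⟨i, h⟩ = a}

/-- `L_{◇^a_Q}`. -/
def diamLang (a : A) (Q : Set ℕ) : Set (List A) :=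
  {w | (contentSet a w ∩ Q).Nonempty}

/-- The Boolean algebra `B₁`, as a membership predicate. -/
def B1 (A : Type*) : Set (List A) → Prop :=
  GenBool {L | ∃ (a : A) (Q : Set ℕ), L = diamLang a Q}

/-- `A* ⊗ ℕ`. -/
abbrev Dom1 (A : Type*) : Type _ := {x : List A × ℕ // x.2 < x.1.length}

/-- `A* ⊗ ℕ²`. -/
abbrev Dom2 (A : Type*) : Type _ :=
  {x : List A × ℕ × ℕ // x.2.1 < x.1.length ∧ x.2.2 < x.1.length}

/-- `A* ⊗ ℕ³`. -/
abbrev Dom3 (A : Type*) : Type _ :=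
  {x : List A × ℕ × ℕ × ℕ //
    x.2.1 < x.1.length ∧ x.2.2.1 < x.1.length ∧ x.2.2.2 < x.1.length}

/-- `f_{a,b}(w,j₁,j₂) = w(j₁→a)(j₂→b)` if `j₁ ≠ j₂`, and `w` otherwise. -/
def f2 (a b : A) : Dom2 A → List A := fun x =>
  if x.1.2.1 ≠ x.1.2.2 then (x.1.1.set x.1.2.1 a).set x.1.2.2 b else x.1.1

/-- `f_{a,b,c}(w,j₁,j₂,j₃) = w(j₁→a)(j₂→b)(j₃→c)` if `j₁,j₂,j₃` are pairwise
distinct, and `w` otherwise. -/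
def f3 (a b c : A) : Dom3 A → List A := fun x =>
  if x.1.2.1 ≠ x.1.2.2.1 ∧ x.1.2.1 ≠ x.1.2.2.2 ∧ x.1.2.2.1 ≠ x.1.2.2.2 then
    ((x.1.1.set x.1.2.1 a).set x.1.2.2.1 b).set x.1.2.2.2 c
  else x.1.1

/-- `f_a(w,i) = w(i→a)`. -/
def f1 (a : A) : Dom1 A → List A := fun x => x.1.1.set x.1.2 a

/-- `f_a·a(w,i) = w(i→a).a`. -/
def f1app (a : A) : Dom1 A → List A := fun x => x.1.1.set x.1.2 a ++ [a]

/-- `L` satisfies the family of ultrafilter equations `E_{ab=ba}`. -/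
def SatAB (L : Set (List A)) (a b : A) : Prop :=
  ∀ ν : Ultrafilter (Dom2 A),
    Ultrafilter.map (fun x => x.1.2.1) ν = Ultrafilter.map (fun x => x.1.2.2) ν →
      (f2 a b ⁻¹' L ∈ ν ↔ f2 b a ⁻¹' L ∈ ν)

/-- `L` satisfies the family of ultrafilter equations `E_{aab=abb}`. -/
def SatAAB (L : Set (List A)) (a b : A) : Prop :=
  ∀ ν : Ultrafilter (Dom3 A),
    (Ultrafilter.map (fun x => x.1.2.1) ν = Ultrafilter.map (fun x => x.1.2.2.1) ν ∧
      Ultrafilter.map (fun x => x.1.2.2.1) ν = Ultrafilter.map (fun x => x.1.2.2.2) ν) →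
      (f3 a a b ⁻¹' L ∈ ν ↔ f3 a b b ⁻¹' L ∈ ν)

/-- `L` satisfies the family of ultrafilter equations `E_{a=a·a}`. -/
def SatAA (L : Set (List A)) (a : A) : Prop :=
  ∀ ν : Ultrafilter (Dom1 A),
    Ultrafilter.map (fun x => x.1.2) ν = Ultrafilter.map (fun x => x.1.1.length) ν →
      (f1 a ⁻¹' L ∈ ν ↔ f1app a ⁻¹' L ∈ ν)

/-! Whether a word lies in `L_{◇^c_Q}` depends only on its set of `c`-positions. Each map `f` of
the equations overwrites (or appends) letters `α k` at positions `p k`, so `f x ∈ L_{◇^c_Q}` iff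
an untouched `c`-position of `w` lies in `Q`, or `p k x ∈ Q` for some `k` with `α k = c`. Along an
ultrafilter `ν` under which all the `p k` have the same image `μ`, the second alternative becomes
"`c` is one of the letters written, and `Q ∈ μ`"; both sides of each equation write the same set
of letters at positions with the same untouched remainder, hence agree. Taking preimages commutes
with the Boolean operations, so the equations pass from the generators to all of `B₁`. -/

lemma GenBool.preimage_mem_iff {α X : Type*} {S : Set (Set α)} {L : Set α}
    (hL : GenBool S L) {ν : Ultrafilter X} {u v : X → α}
    (hS : ∀ s ∈ S, u ⁻¹' s ∈ ν ↔ v ⁻¹' s ∈ ν) : u ⁻¹' L ∈ ν ↔ v ⁻¹' L ∈ ν := by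
  induction hL with
  | basic hs => exact hS _ hs
  | univ => simp
  | compl _ ih => simpa only [preimage_compl, Ultrafilter.compl_mem_iff_notMem] using not_congr ih
  | inter _ _ ih₁ ih₂ =>
    simp only [preimage_inter, ← Ultrafilter.mem_coe, Filter.inter_mem_iff] at ih₁ ih₂ ⊢
    exact and_congr ih₁ ih₂

lemma mem_contentSet_iff {c : A} {w : List A} {i : ℕ} :
    i ∈ contentSet c w ↔ ∃ h : i < w.length, w[i] = c := Iff.rfl

lemma mem_contentSet_set {a c : A} {w : List A} {i j : ℕ} :
    i ∈ contentSet c (w.set j a) ↔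
      (i = j ∧ j < w.length ∧ a = c) ∨ (i ≠ j ∧ i ∈ contentSet c w) := by
  simp only [mem_contentSet_iff, List.length_set, List.getElem_set]
  by_cases h : j = i
  · subst h; simp
  · simp [h, Ne.symm h]

lemma mem_contentSet_append_singleton {a c : A} {w : List A} {i : ℕ} :
    i ∈ contentSet c (w ++ [a]) ↔ (i = w.length ∧ a = c) ∨ i ∈ contentSet c w := by
  simp only [mem_contentSet_iff, List.length_append, List.length_singleton,
    List.getElem_append]
  grind

lemma contentSet_set_set {a b c : A} {w : List A} {j₁ j₂ : ℕ} (h₁ : j₁ < w.length)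
    (h₂ : j₂ < w.length) (h : j₁ ≠ j₂) :
    contentSet c ((w.set j₁ a).set j₂ b) =
      contentSet c w \ {j₁, j₂} ∪ {i | ∃ k, ![j₁, j₂] k = i ∧ ![a, b] k = c} := by
  ext i
  simp only [mem_union, mem_sdiff, mem_insert_iff, mem_singleton_iff, mem_ofPred_eq,
    Fin.exists_fin_two, Matrix.cons_val_zero, Matrix.cons_val_one, mem_contentSet_set]
  grind

lemma contentSet_set_set_set {a₁ a₂ a₃ c : A} {w : List A} {j₁ j₂ j₃ : ℕ} (h₁ : j₁ < w.length)
    (h₂ : j₂ < w.length) (h₃ : j₃ < w.length) (h₁₂ : j₁ ≠ j₂) (h₁₃ : j₁ ≠ j₃) (h₂₃ : j₂ ≠ j₃) :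
    contentSet c (((w.set j₁ a₁).set j₂ a₂).set j₃ a₃) =
      contentSet c w \ {j₁, j₂, j₃} ∪ {i | ∃ k, ![j₁, j₂, j₃] k = i ∧ ![a₁, a₂, a₃] k = c} := by
  ext i
  simp only [mem_union, mem_sdiff, mem_insert_iff, mem_singleton_iff, mem_ofPred_eq,
    Fin.exists_fin_succ, Fin.exists_fin_zero, Matrix.cons_val_zero, Matrix.cons_val_succ,
    mem_contentSet_set]
  grind

lemma contentSet_set {a c : A} {w : List A} {j : ℕ} (h : j < w.length) :
    contentSet c (w.set j a) = contentSet c w \ {j} ∪ {i | ∃ k, ![j] k = i ∧ ![a] k = c} := by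
  ext i
  simp only [mem_union, mem_sdiff, mem_singleton_iff, mem_ofPred_eq, Fin.exists_fin_one,
    Matrix.cons_val_fin_one, mem_contentSet_set]
  grind

lemma contentSet_set_append {a c : A} {w : List A} {j : ℕ} (h : j < w.length) :
    contentSet c (w.set j a ++ [a]) =
      contentSet c w \ {j} ∪ {i | ∃ k, ![j, w.length] k = i ∧ ![a, a] k = c} := by
  ext i
  simp only [mem_union, mem_sdiff, mem_singleton_iff, mem_ofPred_eq, Fin.exists_fin_two,
    Matrix.cons_val_zero, Matrix.cons_val_one, mem_contentSet_append_singleton, mem_contentSet_set]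
  grind

section Overwrite

variable {X : Type*} {ν : Ultrafilter X} {μ : Ultrafilter ℕ}

theorem eventually_mem_diamLang_iff {ι : Type*} [Finite ι] {u : X → List A}
    {R : A → X → Set ℕ} {α : ι → A} {p : ι → X → ℕ}
    (hu : ∀ᶠ x in ν, ∀ c, contentSet c (u x) = R c x ∪ {i | ∃ k, p k x = i ∧ α k = c})
    (hp : ∀ k, ν.map (p k) = μ) (c : A) (Q : Set ℕ) :
    (∀ᶠ x in ν, u x ∈ diamLang c Q) ↔
      (∀ᶠ x in ν, (R c x ∩ Q).Nonempty) ∨ (c ∈ range α ∧ Q ∈ μ) := by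
  have hpQ (k : ι) : (∀ᶠ x in ν, p k x ∈ Q) ↔ Q ∈ μ := by rw [← hp k]; rfl
  calc (∀ᶠ x in ν, u x ∈ diamLang c Q)
      ↔ ∀ᶠ x in ν, (R c x ∩ Q).Nonempty ∨ ∃ k, α k = c ∧ p k x ∈ Q := by
        refine Filter.eventually_congr (hu.mono fun x hx => ?_)
        simp only [diamLang, mem_ofPred_eq, hx c, union_inter_distrib_right, union_nonempty]
        simp only [inter_nonempty, mem_ofPred_eq, ↓existsAndEq, true_and]
    _ ↔ (∀ᶠ x in ν, (R c x ∩ Q).Nonempty) ∨ ∃ k, α k = c ∧ Q ∈ μ := by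
        simp only [Ultrafilter.eventually_or, Ultrafilter.eventually_exists_iff,
          Filter.eventually_and, Filter.eventually_const, hpQ]
    _ ↔ (∀ᶠ x in ν, (R c x ∩ Q).Nonempty) ∨ (c ∈ range α ∧ Q ∈ μ) := by
        simp only [mem_range, exists_and_right]

theorem B1.preimage_mem_iff_of_overwrite {L : Set (List A)} (hL : B1 A L)
    {ι κ : Type*} [Finite ι] [Finite κ] {u v : X → List A} {R : A → X → Set ℕ}
    {α : ι → A} {p : ι → X → ℕ} {β : κ → A} {q : κ → X → ℕ}
    (hu : ∀ᶠ x in ν, ∀ c, contentSet c (u x) = R c x ∪ {i | ∃ k, p k x = i ∧ α k = c})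
    (hv : ∀ᶠ x in ν, ∀ c, contentSet c (v x) = R c x ∪ {i | ∃ k, q k x = i ∧ β k = c})
    (hp : ∀ k, ν.map (p k) = μ) (hq : ∀ k, ν.map (q k) = μ) (hαβ : range α = range β) :
    u ⁻¹' L ∈ ν ↔ v ⁻¹' L ∈ ν :=
  hL.preimage_mem_iff fun _ ⟨c, Q, hs⟩ => hs ▸
    (eventually_mem_diamLang_iff hu hp c Q).trans
      (hαβ ▸ (eventually_mem_diamLang_iff hv hq c Q).symm)

end Overwrite

variable {L : Set (List A)}

theorem B1.satAB (hL : B1 A L) (a b : A) : SatAB L a b := by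
  intro ν hν
  rcases ν.em (fun x : Dom2 A => x.1.2.1 = x.1.2.2) with hdiag | hoff
  · exact Filter.congr_sets (hdiag.mono fun x hx => by simp [f2, hx])
  · have hoverwrite (a₁ a₂ : A) : ∀ᶠ x in ν, ∀ c, contentSet c (f2 a₁ a₂ x) =
        contentSet c x.1.1 \ {x.1.2.1, x.1.2.2} ∪
          {i | ∃ k, ![x.1.2.1, x.1.2.2] k = i ∧ ![a₁, a₂] k = c} :=
      hoff.mono fun x hx c => by
        simp only [f2, if_pos hx]; exact contentSet_set_set x.2.1 x.2.2 hx
    refine hL.preimage_mem_iff_of_overwrite (μ := ν.map (fun x => x.1.2.1))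
      (hoverwrite a b) (hoverwrite b a) ?_ ?_ ?_
    · simp [Fin.forall_fin_two, hν]
    · simp [Fin.forall_fin_two, hν]
    · simp [Matrix.range_cons, pair_comm]

theorem B1.satAAB (hL : B1 A L) (a b : A) : SatAAB L a b := by
  rintro ν ⟨hν₁₂, hν₂₃⟩
  rcases ν.em (fun x : Dom3 A => x.1.2.1 ≠ x.1.2.2.1 ∧ x.1.2.1 ≠ x.1.2.2.2 ∧
      x.1.2.2.1 ≠ x.1.2.2.2) with hdistinct | hcoincide
  · have hoverwrite (a₁ a₂ a₃ : A) : ∀ᶠ x in ν, ∀ c, contentSet c (f3 a₁ a₂ a₃ x) =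
        contentSet c x.1.1 \ {x.1.2.1, x.1.2.2.1, x.1.2.2.2} ∪
          {i | ∃ k, ![x.1.2.1, x.1.2.2.1, x.1.2.2.2] k = i ∧ ![a₁, a₂, a₃] k = c} :=
      hdistinct.mono fun x hx c => by
        simp only [f3, if_pos hx]
        exact contentSet_set_set_set x.2.1 x.2.2.1 x.2.2.2 hx.1 hx.2.1 hx.2.2
    refine hL.preimage_mem_iff_of_overwrite (μ := ν.map (fun x => x.1.2.1))
      (hoverwrite a a b) (hoverwrite a b b) ?_ ?_ ?_
    · simp [Fin.forall_fin_succ, hν₁₂, hν₂₃]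
    · simp [Fin.forall_fin_succ, hν₁₂, hν₂₃]
    · simp [Matrix.range_cons]
  · exact Filter.congr_sets (hcoincide.mono fun x hx => by simp only [mem_preimage, f3, if_neg hx])

theorem B1.satAA (hL : B1 A L) (a : A) : SatAA L a := by
  intro ν hν
  refine hL.preimage_mem_iff_of_overwrite (μ := ν.map (fun x => x.1.2))
    (.of_forall fun x _ => contentSet_set x.2)
    (.of_forall fun x _ => contentSet_set_append x.2) ?_ ?_ ?_
  · simp
  · simp [Fin.forall_fin_two, hν]
  · simp [Matrix.range_cons]

theorem statement1_general (A : Type*) (L : Set (List A))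
    (hL : B1 A L) : ∀ a b : A, SatAB L a b ∧ SatAAB L a b ∧ SatAA L a :=
  fun a b => ⟨hL.satAB a b, hL.satAAB a b, hL.satAA a⟩

/-- If a language `L ⊆ A*` belongs to `B₁`, then `L` satisfies the families of
ultrafilter equations `E_{ab=ba}`, `E_{aab=abb}` and `E_{a=a·a}` for all `a, b ∈ A`. -/
theorem statement1 (A : Type*) [Fintype A] [Nonempty A] (L : Set (List A))
    (hL : B1 A L) : ∀ a b : A, SatAB L a b ∧ SatAAB L a b ∧ SatAA L a :=
  statement1_general A L hL

end Stmt1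
end

section
/- Let A be a finite alphabet, k, n ≥ 1, and let p₁,...,pₙ : A*⊗(ℕᵏ)ⁿ → ℕᵏ and u, v : A*⊗(ℕᵏ)ⁿ → A* be maps. A language L ⊆ A* satisfies the family of ultrafilter equations E^{p₁,...,pₙ}_{u=v} if and only if there exists a finite colouring (Q₁,...,Q_ℓ) of ℕᵏ such that ⋃_{i=1}^ℓ ⋂_{j=1}^n p_j⁻¹(Q_i) ⊆ E_{L,u,v}. -/
/-!
For an ultrafilter `ν`, `u⁻¹'L ∈ ν ↔ v⁻¹'L ∈ ν` just says `E_{L,u,v} ∈ ν`. The ultrafilters whose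
images under all `p j` equal `μ` are exactly those finer than `⨅ j, comap (p j) μ`, so the
equations hold iff every ultrafilter `μ` on `ℕᵏ` contains some `T` with
`⋂ j, p j⁻¹' T ⊆ E_{L,u,v}`. By compactness of the space of ultrafilters, finitely many such `T`
cover `ℕᵏ`, and disjointing them gives the colouring; conversely, the colours of such a colouring
are sets of this kind.
-/

open Set

namespace Stmt5

/-- `A* ⊗ (ℕᵏ)ⁿ`: words together with `n` tuples of `k` positions. -/
abbrev DomKN (A : Type*) (k n : ℕ) : Type _ :=
  {x : List A × (Fin n → Fin k → ℕ) // ∀ m j, x.2 m j < x.1.length}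

open Filter

theorem iff_mem_iff_setOf_iff_mem {X : Type*} (ν : Ultrafilter X) (s t : Set X) :
    (s ∈ ν ↔ t ∈ ν) ↔ {x | x ∈ s ↔ x ∈ t} ∈ ν := by
  have h : {x | x ∈ s ↔ x ∈ t} = (s ∩ t) ∪ (sᶜ ∩ tᶜ) := by
    ext x
    simp only [mem_ofPred_eq, mem_union, mem_inter_iff, mem_compl_iff]
    tauto
  have hinter : ∀ a b : Set X, a ∩ b ∈ ν ↔ a ∈ ν ∧ b ∈ ν := fun _ _ => inter_mem_iff
  simp only [h, Ultrafilter.union_mem_iff, hinter, Ultrafilter.compl_mem_iff_notMem]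
  tauto

section Diagonal

variable {ι X Y : Type*} (p : ι → X → Y)

theorem mem_iInf_comap_iff [Finite ι] (μ : Filter Y) (E : Set X) :
    E ∈ ⨅ j, comap (p j) μ ↔ ∃ T ∈ μ, ⋂ j, p j ⁻¹' T ⊆ E := by
  constructor
  · intro hE
    obtain ⟨t, ht, rfl⟩ := (mem_iInf_of_finite E).1 hE
    choose T hT hTt using fun j => mem_comap.1 (ht j)
    exact ⟨⋂ j, T j, iInter_mem.2 hT,
      iInter_mono fun j => (preimage_mono (iInter_subset T j)).trans (hTt j)⟩
  · rintro ⟨T, hT, hTE⟩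
    exact mem_of_superset (iInter_mem.2 fun j => mem_iInf_of_mem j (preimage_mem_comap hT)) hTE

theorem le_iInf_comap_iff (ν : Ultrafilter X) (μ : Ultrafilter Y) :
    (ν : Filter X) ≤ ⨅ j, comap (p j) (μ : Filter Y) ↔ ∀ j, ν.map (p j) = μ := by
  simp only [le_iInf_iff, ← map_le_iff_le_comap, ← Ultrafilter.coe_map, Ultrafilter.coe_le_coe]

theorem map_eq_map_iff_exists [Nonempty Y] (ν : Ultrafilter X) :
    (∀ i j, ν.map (p i) = ν.map (p j)) ↔ ∃ μ : Ultrafilter Y, ∀ j, ν.map (p j) = μ := by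
  constructor
  · intro h
    rcases isEmpty_or_nonempty ι with hι | ⟨⟨i⟩⟩
    · exact ⟨pure (Classical.arbitrary Y), isEmptyElim⟩
    · exact ⟨ν.map (p i), fun j => h j i⟩
  · rintro ⟨μ, hμ⟩ i j
    rw [hμ, hμ]

theorem forall_map_eq_map_imp_mem_iff [Nonempty Y] (E : Set X) :
    (∀ ν : Ultrafilter X, (∀ i j, ν.map (p i) = ν.map (p j)) → E ∈ ν) ↔
      ∀ μ : Ultrafilter Y, E ∈ ⨅ j, comap (p j) (μ : Filter Y) := by
  simp only [map_eq_map_iff_exists, mem_iff_ultrafilter (f := ⨅ j, comap (p j) _),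
    le_iInf_comap_iff]
  exact ⟨fun h μ ν hν => h ν ⟨μ, hν⟩, fun h ν ⟨μ, hν⟩ => h μ ν hν⟩

end Diagonal

/-- Compactness of the space of ultrafilters. -/
theorem forall_ultrafilter_exists_mem_iff {Y : Type*} (P : Set Y → Prop) :
    (∀ μ : Ultrafilter Y, ∃ T ∈ μ, P T) ↔
      ∃ t : Set (Set Y), t.Finite ∧ (∀ T ∈ t, P T) ∧ ⋃₀ t = univ := by
  constructor
  · intro h
    obtain ⟨t, htP, htfin, hcov⟩ := isCompact_univ.elim_finite_subcover_image
      (b := {T | P T}) (c := fun T => {μ : Ultrafilter Y | T ∈ μ})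
      (fun T _ => ultrafilter_isOpen_basic T)
      (fun μ _ => by obtain ⟨T, hT, hP⟩ := h μ; exact mem_biUnion hP hT)
    refine ⟨t, htfin, htP, eq_univ_of_forall fun y => ?_⟩
    obtain ⟨T, hT, hyT⟩ := mem_iUnion₂.1 (hcov (mem_univ (pure y)))
    exact ⟨T, hT, Ultrafilter.mem_pure.1 hyT⟩
  · rintro ⟨t, htfin, htP, hcov⟩ μ
    obtain ⟨T, hT, hTμ⟩ := (Ultrafilter.finite_sUnion_mem_iff htfin).1 (hcov ▸ univ_mem)
    exact ⟨T, hTμ, htP T hT⟩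

theorem exists_finite_cover_iff_exists_partition {Y : Type*} [Nonempty Y] {P : Set Y → Prop}
    (hP : ∀ S T, S ⊆ T → P T → P S) :
    (∃ t : Set (Set Y), t.Finite ∧ (∀ T ∈ t, P T) ∧ ⋃₀ t = univ) ↔
      ∃ ℓ, 1 ≤ ℓ ∧ ∃ Q : Fin ℓ → Set Y, (Pairwise fun i j => Disjoint (Q i) (Q j)) ∧
        ⋃ i, Q i = univ ∧ ∀ i, P (Q i) := by
  constructor
  · rintro ⟨t, htfin, htP, hcov⟩
    obtain ⟨m, g, rfl⟩ := htfin.fin_embedding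
    obtain ⟨_, ⟨i, rfl⟩, -⟩ := hcov.symm ▸ mem_univ (Classical.arbitrary Y)
    refine ⟨m, i.pos, disjointed g, disjoint_disjointed g, ?_,
      fun i => hP _ _ (disjointed_subset g i) (htP _ (mem_range_self i))⟩
    rw [iUnion_disjointed, ← sUnion_range]
    exact hcov
  · rintro ⟨ℓ, -, Q, -, hcov, hQ⟩
    exact ⟨range Q, finite_range Q, forall_mem_range.2 hQ, by rwa [sUnion_range]⟩

theorem statement5_general (A : Type*) (k n : ℕ)
    (p : Fin n → DomKN A k n → (Fin k → ℕ)) (u v : DomKN A k n → List A)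
    (L : Set (List A)) :
    (∀ ν : Ultrafilter (DomKN A k n),
        (∀ i j : Fin n, Ultrafilter.map (p i) ν = Ultrafilter.map (p j) ν) →
          (u ⁻¹' L ∈ ν ↔ v ⁻¹' L ∈ ν)) ↔
      ∃ (ℓ : ℕ), 1 ≤ ℓ ∧ ∃ Q : Fin ℓ → Set (Fin k → ℕ),
        (Pairwise fun i j => Disjoint (Q i) (Q j)) ∧ (⋃ i, Q i = Set.univ) ∧
        (⋃ i, ⋂ j, p j ⁻¹' Q i) ⊆ {x | u x ∈ L ↔ v x ∈ L} := by
  let E : Set (DomKN A k n) := {x | u x ∈ L ↔ v x ∈ L}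
  calc _ ↔ ∀ ν : Ultrafilter (DomKN A k n), (∀ i j, ν.map (p i) = ν.map (p j)) → E ∈ ν := by
        simp only [iff_mem_iff_setOf_iff_mem, E, mem_preimage]
    _ ↔ ∀ μ : Ultrafilter (Fin k → ℕ), ∃ T ∈ μ, ⋂ j, p j ⁻¹' T ⊆ E := by
        simp only [forall_map_eq_map_imp_mem_iff, mem_iInf_comap_iff, Ultrafilter.mem_coe]
    _ ↔ ∃ t : Set (Set (Fin k → ℕ)), t.Finite ∧ (∀ T ∈ t, ⋂ j, p j ⁻¹' T ⊆ E) ∧ ⋃₀ t = univ :=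
        forall_ultrafilter_exists_mem_iff _
    _ ↔ _ := exists_finite_cover_iff_exists_partition
        fun S T hST hT => (iInter_mono fun j => preimage_mono hST).trans hT
    _ ↔ _ := by simp only [iUnion_subset_iff, E]

/-- A language `L ⊆ A*` satisfies the family of ultrafilter equations
`E^{p₁,...,pₙ}_{u=v}` if and only if there exists a finite colouring `(Q₁,...,Q_ℓ)` of
`ℕᵏ` such that `⋃_{i=1}^ℓ ⋂_{j=1}^n p_j⁻¹(Q_i) ⊆ E_{L,u,v}`. -/
theorem statement5 (A : Type*) [Fintype A] [Nonempty A] (k n : ℕ)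
    (hk : 1 ≤ k) (hn : 1 ≤ n)
    (p : Fin n → DomKN A k n → (Fin k → ℕ)) (u v : DomKN A k n → List A)
    (L : Set (List A)) :
    (∀ ν : Ultrafilter (DomKN A k n),
        (∀ i j : Fin n, Ultrafilter.map (p i) ν = Ultrafilter.map (p j) ν) →
          (u ⁻¹' L ∈ ν ↔ v ⁻¹' L ∈ ν)) ↔
      ∃ (ℓ : ℕ), 1 ≤ ℓ ∧ ∃ Q : Fin ℓ → Set (Fin k → ℕ),
        (Pairwise fun i j => Disjoint (Q i) (Q j)) ∧ (⋃ i, Q i = Set.univ) ∧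
        (⋃ i, ⋂ j, p j ⁻¹' Q i) ⊆ {x | u x ∈ L ↔ v x ∈ L} :=
  statement5_general A k n p u v L

end Stmt5
end

section
/- Let A be a finite alphabet. A language L ⊆ A* satisfies the families of ultrafilter equations E_{ab=ba}, E_{aab=abb} and E_{a=a·a} for all a, b ∈ A if and only if there exists a finite colouring (Q₁,...,Q_ℓ) of ℕ such that for all a, b ∈ A: ⋃_{i=1}^ℓ A*⊗Q_i² ⊆ E_{L,f_{a,b},f_{b,a}}, ⋃_{i=1}^ℓ A*⊗Q_i³ ⊆ E_{L,f_{a,a,b},f_{a,b,b}}, and ⋃_{i=1}^ℓ L_{Q_i}⊗Q_i ⊆ E_{L,f_a,f_a·a}. -/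
open Set

namespace Stmt6

variable {A : Type*}

/-- `c_a(w)`: the set of positions of the word `w` carrying the letter `a`. -/
def contentSet (a : A) (w : List A) : Set ℕ :=
  {i | ∃ h : i < w.length, w.get ⟨i, h⟩ = a}

/-- `L_{◇^a_Q}`. -/
def diamLang (a : A) (Q : Set ℕ) : Set (List A) :=
  {w | (contentSet a w ∩ Q).Nonempty}

/-- `A* ⊗ ℕ`. -/
abbrev Dom1 (A : Type*) : Type _ := {x : List A × ℕ // x.2 < x.1.length}

/-- `A* ⊗ ℕ²`. -/
abbrev Dom2 (A : Type*) : Type _ :=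
  {x : List A × ℕ × ℕ // x.2.1 < x.1.length ∧ x.2.2 < x.1.length}

/-- `A* ⊗ ℕ³`. -/
abbrev Dom3 (A : Type*) : Type _ :=
  {x : List A × ℕ × ℕ × ℕ //
    x.2.1 < x.1.length ∧ x.2.2.1 < x.1.length ∧ x.2.2.2 < x.1.length}

/-- `f_{a,b}(w,j₁,j₂) = w(j₁→a)(j₂→b)` if `j₁ ≠ j₂`, and `w` otherwise. -/
def f2 (a b : A) : Dom2 A → List A := fun x =>
  if x.1.2.1 ≠ x.1.2.2 then (x.1.1.set x.1.2.1 a).set x.1.2.2 b else x.1.1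

/-- `f_{a,b,c}(w,j₁,j₂,j₃) = w(j₁→a)(j₂→b)(j₃→c)` if `j₁,j₂,j₃` are pairwise
distinct, and `w` otherwise. -/
def f3 (a b c : A) : Dom3 A → List A := fun x =>
  if x.1.2.1 ≠ x.1.2.2.1 ∧ x.1.2.1 ≠ x.1.2.2.2 ∧ x.1.2.2.1 ≠ x.1.2.2.2 then
    ((x.1.1.set x.1.2.1 a).set x.1.2.2.1 b).set x.1.2.2.2 c
  else x.1.1

/-- `f_a(w,i) = w(i→a)`. -/
def f1 (a : A) : Dom1 A → List A := fun x => x.1.1.set x.1.2 a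

/-- `f_a·a(w,i) = w(i→a).a`. -/
def f1app (a : A) : Dom1 A → List A := fun x => x.1.1.set x.1.2 a ++ [a]

/-- `L` satisfies the family of ultrafilter equations `E_{ab=ba}`. -/
def SatAB (L : Set (List A)) (a b : A) : Prop :=
  ∀ ν : Ultrafilter (Dom2 A),
    Ultrafilter.map (fun x => x.1.2.1) ν = Ultrafilter.map (fun x => x.1.2.2) ν →
      (f2 a b ⁻¹' L ∈ ν ↔ f2 b a ⁻¹' L ∈ ν)

/-- `L` satisfies the family of ultrafilter equations `E_{aab=abb}`. -/
def SatAAB (L : Set (List A)) (a b : A) : Prop :=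
  ∀ ν : Ultrafilter (Dom3 A),
    (Ultrafilter.map (fun x => x.1.2.1) ν = Ultrafilter.map (fun x => x.1.2.2.1) ν ∧
      Ultrafilter.map (fun x => x.1.2.2.1) ν = Ultrafilter.map (fun x => x.1.2.2.2) ν) →
      (f3 a a b ⁻¹' L ∈ ν ↔ f3 a b b ⁻¹' L ∈ ν)

/-- `L` satisfies the family of ultrafilter equations `E_{a=a·a}`. -/
def SatAA (L : Set (List A)) (a : A) : Prop :=
  ∀ ν : Ultrafilter (Dom1 A),
    Ultrafilter.map (fun x => x.1.2) ν = Ultrafilter.map (fun x => x.1.1.length) ν →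
      (f1 a ⁻¹' L ∈ ν ↔ f1app a ⁻¹' L ∈ ν)

/-- `⟨w,Q⟩`: the content of the word `w` on `Q ⊆ ℕ`. -/
def wordContent (w : List A) (Q : Set ℕ) : Set A :=
  {a | (contentSet a w ∩ Q).Nonempty}

/-- `E_{L,u,v} := {x : u(x) ∈ L ⟺ v(x) ∈ L}`. -/
def ESet {X : Type*} (L : Set (List A)) (u v : X → List A) : Set X :=
  {x | u x ∈ L ↔ v x ∈ L}

/-!
Fix one equation `u = v` with projections `p₁, …, pₙ`. If some ultrafilter `μ` on `ℕ` contained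
no `Q` with `p⁻¹(Qⁿ) ⊆ E_{L,u,v}`, the counterexamples would carry an ultrafilter `ν` with
`E_{L,u,v}ᶜ ∈ ν` and all pushforwards `pₖ(ν)` equal to `μ`, violating the equation. Conversely a
good `Q ∈ μ` forces `E_{L,u,v} ∈ ν` whenever all `pₖ(ν) = μ`. As the alphabet is finite, one
`Q ∈ μ` serves all equations at once; compactness of `βℕ` then yields finitely many good sets
covering `ℕ`, and since goodness passes to subsets they can be made disjoint.
-/

theorem forall_apply_eq_iff_fin_two {γ : Type*} (f : Fin 2 → γ) :
    (∀ k k', f k = f k') ↔ f 0 = f 1 := by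
  simp only [Fin.forall_fin_two]
  grind

theorem forall_apply_eq_iff_fin_three {γ : Type*} (f : Fin 3 → γ) :
    (∀ k k', f k = f k') ↔ f 0 = f 1 ∧ f 1 = f 2 := by
  simp only [Fin.forall_fin_succ]
  grind

section Ultrafilters

variable {X β ι : Type*}

theorem exists_ultrafilter_mem_map_eq [Finite ι] {p : ι → X → β} {μ : Ultrafilter β}
    {B : Set X} (h : ∀ Q ∈ μ, ∃ x ∈ B, ∀ k, p k x ∈ Q) :
    ∃ ν : Ultrafilter X, B ∈ ν ∧ ∀ k, ν.map (p k) = μ := by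
  have : ((⨅ k, Filter.comap (p k) ↑μ) ⊓ Filter.principal B).NeBot := by
    refine Filter.inf_principal_neBot_iff.2 fun U hU => ?_
    obtain ⟨t, ht, rfl⟩ := (Filter.mem_iInf_of_finite U).1 hU
    choose Q hQμ hQt using fun k => Filter.mem_comap.1 (ht k)
    obtain ⟨x, hxB, hxQ⟩ := h (⋂ k, Q k) (Filter.iInter_mem.2 hQμ)
    exact ⟨x, mem_iInter.2 fun k => hQt k (mem_iInter.1 (hxQ k) k), hxB⟩
  obtain ⟨ν, hν⟩ := Ultrafilter.exists_le ((⨅ k, Filter.comap (p k) ↑μ) ⊓ Filter.principal B)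
  refine ⟨ν, Filter.le_principal_iff.1 (hν.trans inf_le_right), fun k => ?_⟩
  rw [← Ultrafilter.coe_le_coe, Ultrafilter.coe_map, Filter.map_le_iff_le_comap]
  exact hν.trans (inf_le_left.trans (iInf_le _ k))

theorem exists_mem_of_iUnion_eq_univ [Finite ι] {Q : ι → Set β} (hQ : ⋃ i, Q i = univ)
    (μ : Ultrafilter β) : ∃ i, Q i ∈ μ :=
  Ultrafilter.eventually_exists_iff.1 <|
    Filter.Eventually.of_forall fun x => mem_iUnion.1 (hQ ▸ mem_univ x)

theorem exists_fin_cover_of_forall_ultrafilter {P : Set β → Prop}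
    (h : ∀ μ : Ultrafilter β, ∃ Q ∈ μ, P Q) :
    ∃ (ℓ : ℕ) (Q : Fin ℓ → Set β), ⋃ i, Q i = univ ∧ ∀ i, P (Q i) := by
  choose Q hQμ hP using h
  obtain ⟨t, ht⟩ := isCompact_univ.elim_finite_subcover (fun μ => {ν : Ultrafilter β | Q μ ∈ ν})
    (fun μ => ultrafilter_isOpen_basic _) fun μ _ => mem_iUnion.2 ⟨μ, hQμ μ⟩
  refine ⟨t.card, fun i => Q (t.equivFin.symm i), eq_univ_of_forall fun x => ?_, fun i => hP _⟩
  obtain ⟨μ, hμt, hxμ⟩ := mem_iUnion₂.1 (ht (mem_univ (pure x)))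
  exact mem_iUnion.2 ⟨t.equivFin ⟨μ, hμt⟩, by simpa using hxμ⟩

theorem forall_ultrafilter_eventually_smallSets_iff_exists_partition [Nonempty β]
    {P : Set β → Prop} (hP : ∀ ⦃s t⦄, s ⊆ t → P t → P s) :
    (∀ μ : Ultrafilter β, ∀ᶠ Q in (μ : Filter β).smallSets, P Q) ↔
      ∃ (ℓ : ℕ), 1 ≤ ℓ ∧ ∃ Q : Fin ℓ → Set β,
        (Pairwise fun i j => Disjoint (Q i) (Q j)) ∧ (⋃ i, Q i = univ) ∧ ∀ i, P (Q i) := by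
  simp only [Filter.eventually_smallSets' hP]
  constructor
  · intro h
    obtain ⟨ℓ, Q, hcover, hPQ⟩ := exists_fin_cover_of_forall_ultrafilter h
    have hℓ : 1 ≤ ℓ := Nat.one_le_iff_ne_zero.2 fun hℓ => by
      subst hℓ
      exact empty_ne_univ ((iUnion_of_empty Q).symm.trans hcover)
    exact ⟨ℓ, hℓ, disjointed Q, disjoint_disjointed Q, iUnion_disjointed.trans hcover,
      fun i => hP (disjointed_subset Q i) (hPQ i)⟩
  · rintro ⟨ℓ, -, Q, -, hcover, hPQ⟩ μ
    obtain ⟨i, hi⟩ := exists_mem_of_iUnion_eq_univ hcover μ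
    exact ⟨Q i, hi, hPQ i⟩

end Ultrafilters

section Equations

variable {X β ι : Type*} (L : Set (List A))

def SatisfiesUltrafilterEq (p : ι → X → β) (u v : X → List A) : Prop :=
  ∀ ν : Ultrafilter X, (∀ k k', ν.map (p k) = ν.map (p k')) → (u ⁻¹' L ∈ ν ↔ v ⁻¹' L ∈ ν)

def SatisfiesOn (p : ι → X → β) (u v : X → List A) (Q : Set β) : Prop :=
  {x | ∀ k, p k x ∈ Q} ⊆ ESet L u v

variable {L}

theorem SatisfiesOn.mono {p : ι → X → β} {u v : X → List A} {Q Q' : Set β} (hQ : Q' ⊆ Q)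
    (h : SatisfiesOn L p u v Q) : SatisfiesOn L p u v Q' :=
  fun _ hx => h fun k => hQ (hx k)

theorem eSet_mem_iff {u v : X → List A} {ν : Ultrafilter X} :
    ESet L u v ∈ ν ↔ (u ⁻¹' L ∈ ν ↔ v ⁻¹' L ∈ ν) := by
  change (∀ᶠ x in (ν : Filter X), u x ∈ L ↔ v x ∈ L) ↔ _
  simp only [iff_iff_implies_and_implies (a := u _ ∈ L), Filter.eventually_and,
    Ultrafilter.eventually_imp]
  exact iff_iff_implies_and_implies.symm

theorem satisfiesUltrafilterEq_iff [Finite ι] [Nonempty β] {p : ι → X → β}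
    {u v : X → List A} :
    SatisfiesUltrafilterEq L p u v ↔
      ∀ μ : Ultrafilter β, ∀ᶠ Q in (μ : Filter β).smallSets, SatisfiesOn L p u v Q := by
  simp only [Filter.eventually_smallSets' fun _ _ => SatisfiesOn.mono]
  constructor
  · intro h μ
    by_contra! hbad
    obtain ⟨ν, hν, hνμ⟩ := exists_ultrafilter_mem_map_eq (p := p) (B := (ESet L u v)ᶜ)
      fun Q hQ => by simpa [SatisfiesOn, not_subset, and_comm] using hbad Q hQ
    have hiff := h ν fun k k' => by rw [hνμ, hνμ]
    exact Ultrafilter.compl_mem_iff_notMem.1 hν (eSet_mem_iff.2 hiff)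
  · intro h ν hν
    obtain ⟨μ, hμ⟩ : ∃ μ : Ultrafilter β, ∀ k, ν.map (p k) = μ := by
      rcases isEmpty_or_nonempty ι with _ | ⟨⟨k₀⟩⟩
      · exact ⟨Classical.arbitrary _, isEmptyElim⟩
      · exact ⟨_, fun k => hν k k₀⟩
    obtain ⟨Q, hQμ, hQ⟩ := h μ
    refine eSet_mem_iff.1 (Filter.mem_of_superset ?_ hQ)
    exact Filter.eventually_all.2 fun k => by rw [← hμ k] at hQμ; exact hQμ

end Equations

def coords2 : Fin 2 → Dom2 A → ℕ := ![fun x => x.1.2.1, fun x => x.1.2.2]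

def coords3 : Fin 3 → Dom3 A → ℕ := ![fun x => x.1.2.1, fun x => x.1.2.2.1, fun x => x.1.2.2.2]

def posAndLength : Fin 2 → Dom1 A → ℕ := ![fun x => x.1.2, fun x => x.1.1.length]

variable {L : Set (List A)}

theorem satAB_iff {a b : A} :
    SatAB L a b ↔ SatisfiesUltrafilterEq L coords2 (f2 a b) (f2 b a) := by
  simp only [SatisfiesUltrafilterEq, forall_apply_eq_iff_fin_two]
  rfl

theorem satAAB_iff {a b : A} :
    SatAAB L a b ↔ SatisfiesUltrafilterEq L coords3 (f3 a a b) (f3 a b b) := by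
  simp only [SatisfiesUltrafilterEq, forall_apply_eq_iff_fin_three]
  rfl

theorem satAA_iff {a : A} :
    SatAA L a ↔ SatisfiesUltrafilterEq L posAndLength (f1 a) (f1app a) := by
  simp only [SatisfiesUltrafilterEq, forall_apply_eq_iff_fin_two]
  rfl

variable (L) in
def SatisfiesAllOn (Q : Set ℕ) : Prop :=
  ∀ a b : A, SatisfiesOn L coords2 (f2 a b) (f2 b a) Q ∧
    SatisfiesOn L coords3 (f3 a a b) (f3 a b b) Q ∧ SatisfiesOn L posAndLength (f1 a) (f1app a) Q

theorem SatisfiesAllOn.mono {Q Q' : Set ℕ} (hQ : Q' ⊆ Q) (h : SatisfiesAllOn L Q) :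
    SatisfiesAllOn L Q' :=
  fun a b => ⟨(h a b).1.mono hQ, (h a b).2.1.mono hQ, (h a b).2.2.mono hQ⟩

theorem forall_sat_iff_eventually_satisfiesAllOn [Finite A] :
    (∀ a b : A, SatAB L a b ∧ SatAAB L a b ∧ SatAA L a) ↔
      ∀ μ : Ultrafilter ℕ, ∀ᶠ Q in (μ : Filter ℕ).smallSets, SatisfiesAllOn L Q := by
  simp only [SatisfiesAllOn, satAB_iff, satAAB_iff, satAA_iff, satisfiesUltrafilterEq_iff,
    Filter.eventually_all, Filter.eventually_and]
  exact ⟨fun h μ a b => ⟨(h a b).1 μ, (h a b).2.1 μ, (h a b).2.2 μ⟩,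
    fun h a b => ⟨fun μ => (h μ a b).1, fun μ => (h μ a b).2.1, fun μ => (h μ a b).2.2⟩⟩

theorem forall_satisfiesAllOn_iff_iUnion_subset {ℓ : ℕ} {Q : Fin ℓ → Set ℕ} :
    (∀ i, SatisfiesAllOn L (Q i)) ↔ ∀ a b : A,
      ((⋃ i, {x : Dom2 A | x.1.2.1 ∈ Q i ∧ x.1.2.2 ∈ Q i}) ⊆ ESet L (f2 a b) (f2 b a)) ∧
      ((⋃ i, {x : Dom3 A | x.1.2.1 ∈ Q i ∧ x.1.2.2.1 ∈ Q i ∧ x.1.2.2.2 ∈ Q i}) ⊆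
          ESet L (f3 a a b) (f3 a b b)) ∧
      ((⋃ i, {x : Dom1 A | x.1.2 ∈ Q i ∧ x.1.1.length ∈ Q i}) ⊆ ESet L (f1 a) (f1app a)) := by
  simp only [SatisfiesAllOn, SatisfiesOn, coords2, coords3, posAndLength, Fin.forall_fin_succ,
    Fin.isValue, Matrix.cons_val', Matrix.cons_val_fin_one, Matrix.cons_val_zero,
    Matrix.cons_val_succ, forall_const, iUnion_subset_iff]
  exact ⟨fun h a b => ⟨fun i => (h i a b).1, fun i => (h i a b).2.1, fun i => (h i a b).2.2⟩,
    fun h i a b => ⟨(h a b).1 i, (h a b).2.1 i, (h a b).2.2 i⟩⟩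

theorem statement6_general (A : Type*) [Fintype A] (L : Set (List A)) :
    (∀ a b : A, SatAB L a b ∧ SatAAB L a b ∧ SatAA L a) ↔
      ∃ (ℓ : ℕ), 1 ≤ ℓ ∧ ∃ Q : Fin ℓ → Set ℕ,
        (Pairwise fun i j => Disjoint (Q i) (Q j)) ∧ (⋃ i, Q i = Set.univ) ∧
        ∀ a b : A,
          ((⋃ i, {x : Dom2 A | x.1.2.1 ∈ Q i ∧ x.1.2.2 ∈ Q i}) ⊆
              ESet L (f2 a b) (f2 b a)) ∧
          ((⋃ i, {x : Dom3 A | x.1.2.1 ∈ Q i ∧ x.1.2.2.1 ∈ Q i ∧ x.1.2.2.2 ∈ Q i}) ⊆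
              ESet L (f3 a a b) (f3 a b b)) ∧
          ((⋃ i, {x : Dom1 A | x.1.2 ∈ Q i ∧ x.1.1.length ∈ Q i}) ⊆
              ESet L (f1 a) (f1app a)) := by
  rw [forall_sat_iff_eventually_satisfiesAllOn,
    forall_ultrafilter_eventually_smallSets_iff_exists_partition fun _ _ => SatisfiesAllOn.mono]
  simp only [forall_satisfiesAllOn_iff_iUnion_subset]

/-- A language `L ⊆ A*` satisfies the families of ultrafilter equations `E_{ab=ba}`,
`E_{aab=abb}` and `E_{a=a·a}` for all `a, b ∈ A` if and only if there exists a finite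
colouring `(Q₁,...,Q_ℓ)` of `ℕ` witnessing the corresponding inclusions into the
sets `E_{L,u,v}`. -/
theorem statement6 (A : Type*) [Fintype A] [Nonempty A] (L : Set (List A)) :
    (∀ a b : A, SatAB L a b ∧ SatAAB L a b ∧ SatAA L a) ↔
      ∃ (ℓ : ℕ), 1 ≤ ℓ ∧ ∃ Q : Fin ℓ → Set ℕ,
        (Pairwise fun i j => Disjoint (Q i) (Q j)) ∧ (⋃ i, Q i = Set.univ) ∧
        ∀ a b : A,
          ((⋃ i, {x : Dom2 A | x.1.2.1 ∈ Q i ∧ x.1.2.2 ∈ Q i}) ⊆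
              ESet L (f2 a b) (f2 b a)) ∧
          ((⋃ i, {x : Dom3 A | x.1.2.1 ∈ Q i ∧ x.1.2.2.1 ∈ Q i ∧ x.1.2.2.2 ∈ Q i}) ⊆
              ESet L (f3 a a b) (f3 a b b)) ∧
          ((⋃ i, {x : Dom1 A | x.1.2 ∈ Q i ∧ x.1.1.length ∈ Q i}) ⊆
              ESet L (f1 a) (f1app a)) :=
  statement6_general A L

end Stmt6
end

section
/- Let A be a finite alphabet and k ≥ 1. The Boolean subalgebra of the powerset algebra of A* generated by the languages L_{◇^ā_Q}, for ā ∈ Aᵏ and Q ⊆ ℕᵏ, equals the Boolean subalgebra generated by the languages K_{𝒬,B̄} := {w ∈ A* : ⟨w,Q_i⟩ = B_i for all i ∈ {1,...,ℓ}}, where 𝒬 = (Q₁,...,Q_ℓ) ranges over finite colourings of ℕᵏ (ℓ ≥ 1) and B̄ = (B₁,...,B_ℓ) ranges over ℓ-tuples of subsets of Aᵏ. -/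
/-!
`L_{◇^ā_Q}` is the union of the languages `K_{(Q, Qᶜ), (B₁, B₂)}` with `ā ∈ B₁`, a finite union
because `A` is finite. Conversely, `w ∈ K_{𝒬,B̄}` says exactly that for every colour `Q_i` and
every `ā ∈ Aᵏ` (finitely many), `w ∈ L_{◇^ā_{Q_i}}` holds iff `ā ∈ B_i`.
-/

open Set

namespace Stmt11

/-- Membership in the Boolean subalgebra of `Set α` generated by a family `S`. -/
inductive GenBool {α : Type*} (S : Set (Set α)) : Set α → Prop
  | basic {s : Set α} : s ∈ S → GenBool S s
  | univ : GenBool S Set.univ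
  | compl {s : Set α} : GenBool S s → GenBool S sᶜ
  | inter {s t : Set α} : GenBool S s → GenBool S t → GenBool S (s ∩ t)

variable {A : Type*} {k : ℕ}

/-- `c_ā(w)`: the `ā`-content of a word `w`, i.e. the set of `k`-tuples of positions
of `w` carrying the `k`-tuple of letters `ā`. -/
def contentK (a : Fin k → A) (w : List A) : Set (Fin k → ℕ) :=
  {i | ∀ j, ∃ h : i j < w.length, w.get ⟨i j, h⟩ = a j}

/-- `L_{◇^ā_Q}`. -/
def diamLangK (a : Fin k → A) (Q : Set (Fin k → ℕ)) : Set (List A) :=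
  {w | (contentK a w ∩ Q).Nonempty}

/-- `⟨w,Q⟩`: the content of a word `w` on `Q ⊆ ℕᵏ`. -/
def wordContentK (w : List A) (Q : Set (Fin k → ℕ)) : Set (Fin k → A) :=
  {a | (contentK a w ∩ Q).Nonempty}

/-- The language `K_{𝒬,B̄}` of words having content `B_i` on each colour `Q_i`. -/
def KLang {l : ℕ} (Q : Fin l → Set (Fin k → ℕ)) (B : Fin l → Set (Fin k → A)) :
    Set (List A) :=
  {w | ∀ i, wordContentK w (Q i) = B i}

section GenBool

variable {α : Type*} {S : Set (Set α)}

def GenBool.booleanSubalgebra (S : Set (Set α)) : BooleanSubalgebra (Set α) where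
  carrier := {s | GenBool S s}
  supClosed' s hs t ht := by
    have := (hs.compl.inter ht.compl).compl
    rwa [compl_inter, compl_compl, compl_compl] at this
  infClosed' _ hs _ ht := hs.inter ht
  compl_mem' hs := hs.compl
  bot_mem' := by
    have := (GenBool.univ (S := S)).compl
    rwa [compl_univ] at this

theorem genBool_iff_mem_closure {s : Set α} :
    GenBool S s ↔ s ∈ BooleanSubalgebra.closure S := by
  constructor
  · intro hs
    induction hs with
    | basic hs => exact BooleanSubalgebra.subset_closure hs
    | univ => exact BooleanSubalgebra.top_mem
    | compl _ ih => exact BooleanSubalgebra.compl_mem ih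
    | inter _ _ ihs iht => exact BooleanSubalgebra.inf_mem ihs iht
  · intro hs
    exact BooleanSubalgebra.closure_le (L := GenBool.booleanSubalgebra S).2
      (fun _ ↦ GenBool.basic) hs

theorem genBool_eq_of_subset_closure {T : Set (Set α)}
    (hST : S ⊆ BooleanSubalgebra.closure T) (hTS : T ⊆ BooleanSubalgebra.closure S) :
    GenBool S = GenBool T := by
  have : BooleanSubalgebra.closure S = BooleanSubalgebra.closure T :=
    le_antisymm (BooleanSubalgebra.closure_le.2 hST) (BooleanSubalgebra.closure_le.2 hTS)
  ext s
  rw [genBool_iff_mem_closure, genBool_iff_mem_closure, this]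

end GenBool

def IsColouring {X : Type*} {l : ℕ} (Q : Fin l → Set X) : Prop :=
  (Pairwise fun i j => Disjoint (Q i) (Q j)) ∧ ⋃ i, Q i = univ

theorem isColouring_compl_pair {X : Type*} (Q : Set X) : IsColouring ![Q, Qᶜ] := by
  refine ⟨fun i j hij ↦ ?_, ?_⟩
  · fin_cases i <;> fin_cases j <;> simp_all [disjoint_compl_right, disjoint_compl_left]
  · simp [Fin.exists_fin_two, iUnion_eq_univ_iff, em]

theorem mem_diamLangK_iff {a : Fin k → A} {Q : Set (Fin k → ℕ)} {w : List A} :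
    w ∈ diamLangK a Q ↔ a ∈ wordContentK w Q := Iff.rfl

theorem diamLangK_eq_biUnion_kLang (a : Fin k → A) (Q : Set (Fin k → ℕ)) :
    diamLangK a Q = ⋃ B ∈ {B : Fin 2 → Set (Fin k → A) | a ∈ B 0}, KLang ![Q, Qᶜ] B := by
  ext w
  simp only [mem_iUnion, mem_ofPred_eq, exists_prop]
  constructor
  · intro hw
    exact ⟨![wordContentK w Q, wordContentK w Qᶜ], hw, fun i ↦ by fin_cases i <;> rfl⟩
  · rintro ⟨B, ha, hB⟩
    exact mem_diamLangK_iff.2 ((hB 0).symm ▸ ha)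

theorem kLang_eq_iInter_diamLangK {l : ℕ} (Q : Fin l → Set (Fin k → ℕ))
    (B : Fin l → Set (Fin k → A)) :
    KLang Q B = ⋂ i, ⋂ a, {w | w ∈ diamLangK a (Q i) ↔ a ∈ B i} := by
  ext w
  simp only [KLang, Set.ext_iff, mem_iInter, mem_ofPred_eq, mem_diamLangK_iff]

theorem kLang_mem_closure_diamLangK [Finite A] {l : ℕ} (Q : Fin l → Set (Fin k → ℕ))
    (B : Fin l → Set (Fin k → A)) :
    KLang Q B ∈ BooleanSubalgebra.closure
      {L | ∃ (a : Fin k → A) (Q : Set (Fin k → ℕ)), L = diamLangK a Q} := by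
  rw [kLang_eq_iInter_diamLangK]
  refine BooleanSubalgebra.iInf_mem fun i ↦ BooleanSubalgebra.iInf_mem fun a ↦ ?_
  have hdiam : diamLangK a (Q i) ∈ BooleanSubalgebra.closure
      {L | ∃ (a : Fin k → A) (Q : Set (Fin k → ℕ)), L = diamLangK a Q} :=
    BooleanSubalgebra.subset_closure ⟨a, Q i, rfl⟩
  by_cases ha : a ∈ B i
  · simp only [ha, iff_true]
    exact hdiam
  · simp only [ha, iff_false]
    exact BooleanSubalgebra.compl_mem hdiam

theorem statement11_general (A : Type*) [Fintype A] (k : ℕ) :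
    GenBool {L : Set (List A) |
        ∃ (a : Fin k → A) (Q : Set (Fin k → ℕ)), L = diamLangK a Q} =
      GenBool {L : Set (List A) |
        ∃ (l : ℕ), 1 ≤ l ∧
          ∃ (Q : Fin l → Set (Fin k → ℕ)) (B : Fin l → Set (Fin k → A)),
            (Pairwise fun i j => Disjoint (Q i) (Q j)) ∧ (⋃ i, Q i = Set.univ) ∧
            L = KLang Q B} := by
  refine genBool_eq_of_subset_closure ?_ ?_
  · rintro _ ⟨a, Q, rfl⟩
    rw [diamLangK_eq_biUnion_kLang]
    exact BooleanSubalgebra.biSup_mem (toFinite _) fun B _ ↦ BooleanSubalgebra.subset_closure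
      ⟨2, by norm_num, _, B, (isColouring_compl_pair Q).1, (isColouring_compl_pair Q).2, rfl⟩
  · rintro _ ⟨l, -, Q, B, -, -, rfl⟩
    exact kLang_mem_closure_diamLangK Q B

/-- The Boolean subalgebra generated by the languages `L_{◇^ā_Q}` equals the Boolean
subalgebra generated by the languages `K_{𝒬,B̄}`, where `𝒬` ranges over finite
colourings of `ℕᵏ` and `B̄` over tuples of subsets of `Aᵏ`. -/
theorem statement11 (A : Type*) [Fintype A] [Nonempty A] (k : ℕ) (hk : 1 ≤ k) :
    GenBool {L : Set (List A) |
        ∃ (a : Fin k → A) (Q : Set (Fin k → ℕ)), L = diamLangK a Q} =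
      GenBool {L : Set (List A) |
        ∃ (l : ℕ), 1 ≤ l ∧
          ∃ (Q : Fin l → Set (Fin k → ℕ)) (B : Fin l → Set (Fin k → A)),
            (Pairwise fun i j => Disjoint (Q i) (Q j)) ∧ (⋃ i, Q i = Set.univ) ∧
            L = KLang Q B} :=
  statement11_general A k

end Stmt11
end

section
/- Let A be a finite alphabet, k ≥ 1, and C = (C_ā)_{ā∈Aᵏ} a family of closed subsets of the space of ultrafilters on ℕᵏ (with its Stone topology). Then there exists an ultrafilter γ on A* such that for every ā ∈ Aᵏ and every Q ⊆ ℕᵏ one has (every α ∈ C_ā contains Q) ⟺ L_{□^ā_Q} ∈ γ, if and only if C satisfies the colouring condition. -/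
/-!
For an ultrafilter `γ`, the equivalence `(∀ α ∈ C ā, Q ∈ α) ↔ L_{□^ā_Q} ∈ γ` says exactly that
`γ` contains the set of words `w` with `(∀ α ∈ C ā, Q ∈ α) ↔ w ∈ L_{□^ā_Q}`. Since
`w ∉ L_{□^ā_Q}` iff `ā ∈ ⟨w,Qᶜ⟩`, and some `α ∈ C ā` omits `Q` iff `ā ∈ ⟨C,Qᶜ⟩`, these are the
words whose content agrees with that of `C` on `Qᶜ` at `ā`. Given `γ`, a word in the finite
intersection of these sets over a colouring witnesses the colouring condition. Conversely, both
contents commute with finite unions, so a word matching `C` on the atoms of the Boolean algebra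
generated by finitely many sets `Q` lies in all the corresponding sets: they have the finite
intersection property and extend to an ultrafilter.
-/

open Set

namespace Stmt13

variable {A : Type*} {k : ℕ}

/-- `c_ā(w)`: the `ā`-content of a word `w`. -/
def contentK (a : Fin k → A) (w : List A) : Set (Fin k → ℕ) :=
  {i | ∀ j, ∃ h : i j < w.length, w.get ⟨i j, h⟩ = a j}

/-- `L_{□^ā_Q}`. -/
def boxLangK (a : Fin k → A) (Q : Set (Fin k → ℕ)) : Set (List A) :=
  {w | contentK a w ⊆ Q}

/-- `⟨w,Q⟩`: the content of a word `w` on `Q ⊆ ℕᵏ`. -/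
def wordContentK (w : List A) (Q : Set (Fin k → ℕ)) : Set (Fin k → A) :=
  {a | (contentK a w ∩ Q).Nonempty}

/-- `⟨C,Q⟩`: the content of a generalized word `C` on `Q ⊆ ℕᵏ`. -/
def genContentK (C : (Fin k → A) → Set (Ultrafilter (Fin k → ℕ)))
    (Q : Set (Fin k → ℕ)) : Set (Fin k → A) :=
  {a | ∃ α ∈ C a, Q ∈ α}

/-- `C` satisfies the colouring condition: for every finite colouring of `ℕᵏ` there
is a word with the same profile as `C`. -/
def ColouringCondition (C : (Fin k → A) → Set (Ultrafilter (Fin k → ℕ))) : Prop :=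
  ∀ (l : ℕ), 1 ≤ l → ∀ Q : Fin l → Set (Fin k → ℕ),
    (Pairwise fun i j => Disjoint (Q i) (Q j)) → (⋃ i, Q i = Set.univ) →
    ∃ w : List A, ∀ i, wordContentK w (Q i) = genContentK C (Q i)

theorem _root_.Ultrafilter.setOf_iff_mem_mem_iff {α : Type*} (γ : Ultrafilter α) (p : Prop)
    (S : Set α) : {x | p ↔ x ∈ S} ∈ γ ↔ (p ↔ S ∈ γ) := by
  by_cases hp : p
  · simp [hp]
  · simp only [hp, false_iff]
    exact Ultrafilter.compl_mem_iff_notMem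

theorem _root_.Ultrafilter.exists_forall_mem_of_finite_inter {ι α : Type*} (X : ι → Set α)
    (h : ∀ s : Set ι, s.Finite → ∃ x, ∀ i ∈ s, x ∈ X i) : ∃ γ : Ultrafilter α, ∀ i, X i ∈ γ := by
  obtain ⟨γ, hγ⟩ := Ultrafilter.exists_ultrafilter_of_finite_inter_nonempty (range X)
    fun T hT => by
      choose g hg using fun t : T => hT t.2
      obtain ⟨x, hx⟩ := h (range g) (finite_range g)
      exact ⟨x, fun t ht => by simpa only [hg] using hx (g ⟨t, ht⟩) ⟨_, rfl⟩⟩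
  exact ⟨γ, fun i => hγ ⟨i, rfl⟩⟩

section

variable (C : (Fin k → A) → Set (Ultrafilter (Fin k → ℕ)))

def agreeingWords (a : Fin k → A) (Q : Set (Fin k → ℕ)) : Set (List A) :=
  {w | (∀ α ∈ C a, Q ∈ α) ↔ w ∈ boxLangK a Q}

theorem mem_boxLangK_compl_iff {a : Fin k → A} {Q : Set (Fin k → ℕ)} {w : List A} :
    w ∈ boxLangK a Qᶜ ↔ a ∉ wordContentK w Q := by
  simp [boxLangK, wordContentK, subset_compl_iff_disjoint_right, disjoint_iff_inter_eq_empty,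
    not_nonempty_iff_eq_empty]

theorem forall_compl_mem_iff_notMem_genContentK {a : Fin k → A} {Q : Set (Fin k → ℕ)} :
    (∀ α ∈ C a, Qᶜ ∈ α) ↔ a ∉ genContentK C Q := by
  simp [genContentK, Ultrafilter.compl_mem_iff_notMem]

theorem mem_agreeingWords_compl_iff {a : Fin k → A} {Q : Set (Fin k → ℕ)} {w : List A} :
    w ∈ agreeingWords C a Qᶜ ↔ (a ∈ genContentK C Q ↔ a ∈ wordContentK w Q) := by
  rw [agreeingWords, mem_ofPred_eq, mem_boxLangK_compl_iff,
    forall_compl_mem_iff_notMem_genContentK, not_iff_not]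

theorem agreeingWords_mem_iff (γ : Ultrafilter (List A)) (a : Fin k → A) (Q : Set (Fin k → ℕ)) :
    agreeingWords C a Q ∈ γ ↔ ((∀ α ∈ C a, Q ∈ α) ↔ boxLangK a Q ∈ γ) :=
  γ.setOf_iff_mem_mem_iff _ _

theorem wordContentK_biUnion {ι : Type*} (w : List A) (s : Set ι) (Q : ι → Set (Fin k → ℕ)) :
    wordContentK w (⋃ i ∈ s, Q i) = ⋃ i ∈ s, wordContentK w (Q i) := by
  ext a
  simp [wordContentK, inter_iUnion₂, nonempty_iUnion]

theorem genContentK_biUnion {ι : Type*} {s : Set ι} (hs : s.Finite) (Q : ι → Set (Fin k → ℕ)) :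
    genContentK C (⋃ i ∈ s, Q i) = ⋃ i ∈ s, genContentK C (Q i) := by
  ext a
  simp only [genContentK, mem_ofPred_eq, Ultrafilter.finite_biUnion_mem_iff hs, mem_iUnion₂]
  grind

variable {C}

theorem ColouringCondition.exists_word_preimage (hcc : ColouringCondition C) {β : Type*}
    [Finite β] (f : (Fin k → ℕ) → β) :
    ∃ w : List A, ∀ T : Set β, wordContentK w (f ⁻¹' T) = genContentK C (f ⁻¹' T) := by
  have : Nonempty β := ⟨f 0⟩
  let e := Finite.equivFin β
  obtain ⟨w, hw⟩ := hcc (Nat.card β) Nat.card_pos (fun i => f ⁻¹' {e.symm i})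
    (fun i j hij => pairwise_disjoint_fiber f (e.symm.injective.ne hij))
    (eq_univ_of_forall fun x => mem_iUnion.2 ⟨e (f x), by simp⟩)
  have hfiber (b : β) : wordContentK w (f ⁻¹' {b}) = genContentK C (f ⁻¹' {b}) := by
    simpa using hw (e b)
  refine ⟨w, fun T => ?_⟩
  rw [← biUnion_preimage_singleton, wordContentK_biUnion, genContentK_biUnion C T.toFinite]
  simp_rw [hfiber]

theorem ColouringCondition.exists_ultrafilter (hcc : ColouringCondition C) :
    ∃ γ : Ultrafilter (List A), ∀ a Q, agreeingWords C a Q ∈ γ := by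
  obtain ⟨γ, hγ⟩ := Ultrafilter.exists_forall_mem_of_finite_inter
    (fun p : (Fin k → A) × Set (Fin k → ℕ) => agreeingWords C p.1 p.2) fun s hs => by
      have := hs.to_subtype
      let colour (x : Fin k → ℕ) : Set s := {p | x ∈ p.1.2}
      obtain ⟨w, hw⟩ := hcc.exists_word_preimage colour
      refine ⟨w, fun p hp => ?_⟩
      have hcompl : p.2ᶜ = colour ⁻¹' {t | ⟨p, hp⟩ ∉ t} := by ext; simp [colour]
      rw [← compl_compl p.2, mem_agreeingWords_compl_iff, hcompl, hw]
  exact ⟨γ, fun a Q => hγ (a, Q)⟩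

theorem colouringCondition_of_forall_agreeingWords_mem [Finite A] (γ : Ultrafilter (List A))
    (hγ : ∀ a Q, agreeingWords C a Q ∈ γ) : ColouringCondition C := by
  intro l _ Q _ _
  have hmem : (⋂ i, ⋂ a, agreeingWords C a (Q i)ᶜ) ∈ γ :=
    Filter.iInter_mem.2 fun i => Filter.iInter_mem.2 fun a => hγ a (Q i)ᶜ
  obtain ⟨w, hw⟩ := Filter.nonempty_of_mem hmem
  simp only [mem_iInter, mem_agreeingWords_compl_iff] at hw
  exact ⟨w, fun i => ext fun a => (hw i a).symm⟩

end

theorem statement13_general (A : Type*) [Fintype A] (k : ℕ)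
    (C : (Fin k → A) → Set (Ultrafilter (Fin k → ℕ))) :
    (∃ γ : Ultrafilter (List A),
        ∀ (a : Fin k → A) (Q : Set (Fin k → ℕ)),
          (∀ α ∈ C a, Q ∈ α) ↔ boxLangK a Q ∈ γ) ↔
      ColouringCondition C := by
  simp only [← agreeingWords_mem_iff]
  exact ⟨fun ⟨γ, hγ⟩ => colouringCondition_of_forall_agreeingWords_mem γ hγ,
    ColouringCondition.exists_ultrafilter⟩

/-- A family `C = (C_ā)` of closed subsets of the ultrafilter space on `ℕᵏ` arises
from an ultrafilter `γ` on `A*` (in the sense of Proposition 2.4) if and only if `C`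
satisfies the colouring condition. -/
theorem statement13 (A : Type*) [Fintype A] [Nonempty A] (k : ℕ) (hk : 1 ≤ k)
    (C : (Fin k → A) → Set (Ultrafilter (Fin k → ℕ)))
    (hC : ∀ a, IsClosed (C a)) :
    (∃ γ : Ultrafilter (List A),
        ∀ (a : Fin k → A) (Q : Set (Fin k → ℕ)),
          (∀ α ∈ C a, Q ∈ α) ↔ boxLangK a Q ∈ γ) ↔
      ColouringCondition C :=
  statement13_general A k C

end Stmt13
end

section
/- Let A be a finite alphabet, k ≥ 1, and C = (C_ā)_{ā∈Aᵏ} a family of subsets of the space of ultrafilters on ℕᵏ satisfying the colouring condition. Then for every p̄ = (p₁,...,p_k) ∈ ℕᵏ and every ā = (a₁,...,a_k) ∈ Aᵏ: p̄ ∈ Cont(C_ā) if and only if for every j ∈ {1,...,k}, the constant tuple (p_j,...,p_j) belongs to Cont(C_{(a_j,...,a_j)}). -/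
/-!
Colour `ℕᵏ` so that each point of a finite set `F` is a colour class on its own. An ultrafilter
containing `{q}` is principal at `q`, so the word that the colouring condition provides for this
colouring satisfies `q ∈ Cont(C_b) ↔ q ∈ c_b(w)` for all `q ∈ F` and all `b`. Choosing `F` to
contain `p̄` and the constant tuples `(p_j,...,p_j)` reduces the theorem to the same statement
for a word, where it is immediate: both sides say `w_{p_j} = a_j` for every `j`.
-/

open Set

namespace Stmt14

variable {A : Type*} {k : ℕ}

/-- `c_ā(w)`: the `ā`-content of a word `w`. -/
def contentK (a : Fin k → A) (w : List A) : Set (Fin k → ℕ) :=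
  {i | ∀ j, ∃ h : i j < w.length, w.get ⟨i j, h⟩ = a j}

/-- `⟨w,Q⟩`: the content of a word `w` on `Q ⊆ ℕᵏ`. -/
def wordContentK (w : List A) (Q : Set (Fin k → ℕ)) : Set (Fin k → A) :=
  {a | (contentK a w ∩ Q).Nonempty}

/-- `⟨C,Q⟩`: the content of a generalized word `C` on `Q ⊆ ℕᵏ`. -/
def genContentK (C : (Fin k → A) → Set (Ultrafilter (Fin k → ℕ)))
    (Q : Set (Fin k → ℕ)) : Set (Fin k → A) :=
  {a | ∃ α ∈ C a, Q ∈ α}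

/-- `C` satisfies the colouring condition: for every finite colouring of `ℕᵏ` there
is a word with the same profile as `C`. -/
def ColouringCondition (C : (Fin k → A) → Set (Ultrafilter (Fin k → ℕ))) : Prop :=
  ∀ (l : ℕ), 1 ≤ l → ∀ Q : Fin l → Set (Fin k → ℕ),
    (Pairwise fun i j => Disjoint (Q i) (Q j)) → (⋃ i, Q i = Set.univ) →
    ∃ w : List A, ∀ i, wordContentK w (Q i) = genContentK C (Q i)

/-- `Cont(C)`: the content of a set of ultrafilters on `ℕᵏ`, i.e. the tuples whose
principal ultrafilter lies in it. -/
def Cont (C : Set (Ultrafilter (Fin k → ℕ))) : Set (Fin k → ℕ) :=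
  {i | (pure i : Ultrafilter (Fin k → ℕ)) ∈ C}

theorem mem_wordContentK_singleton {w : List A} {b : Fin k → A} {q : Fin k → ℕ} :
    b ∈ wordContentK w {q} ↔ q ∈ contentK b w :=
  inter_singleton_nonempty

theorem mem_genContentK_singleton {C : (Fin k → A) → Set (Ultrafilter (Fin k → ℕ))}
    {b : Fin k → A} {q : Fin k → ℕ} : b ∈ genContentK C {q} ↔ q ∈ Cont (C b) := by
  constructor
  · rintro ⟨α, hα, hq⟩
    obtain ⟨x, rfl, rfl⟩ := Ultrafilter.eq_pure_of_finite_mem (finite_singleton q) hq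
    exact hα
  · exact fun h => ⟨pure q, h, Ultrafilter.mem_pure.2 rfl⟩

theorem mem_contentK_iff_forall_const {w : List A} {a : Fin k → A} {p : Fin k → ℕ} :
    p ∈ contentK a w ↔ ∀ j, (fun _ : Fin k => p j) ∈ contentK (fun _ => a j) w :=
  forall_congr' fun j => ⟨fun h _ => h, fun h => h j⟩

namespace ColouringCondition

variable {C : (Fin k → A) → Set (Ultrafilter (Fin k → ℕ))}

theorem exists_word_of_finite (hC : ColouringCondition C) {ι : Type*} [Finite ι]
    (f : (Fin k → ℕ) → ι) :
    ∃ w : List A, ∀ i, wordContentK w (f ⁻¹' {i}) = genContentK C (f ⁻¹' {i}) := by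
  obtain ⟨n, ⟨e⟩⟩ := Finite.exists_equiv_fin ι
  have hn : 1 ≤ n := (e (f 0)).pos
  obtain ⟨w, hw⟩ := hC n hn (fun m => f ⁻¹' {e.symm m})
    (fun m m' hmm' => (disjoint_singleton.2 (e.symm.injective.ne hmm')).preimage f)
    (iUnion_eq_univ_iff.2 fun q => ⟨e (f q), by simp⟩)
  exact ⟨w, fun i => by simpa using hw (e i)⟩

theorem exists_word_cont_iff (hC : ColouringCondition C) (F : Finset (Fin k → ℕ)) :
    ∃ w : List A, ∀ q ∈ F, ∀ b, q ∈ Cont (C b) ↔ q ∈ contentK b w := by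
  classical
  let colour (x : Fin k → ℕ) : Option F := if h : x ∈ F then some ⟨x, h⟩ else none
  obtain ⟨w, hw⟩ := hC.exists_word_of_finite colour
  refine ⟨w, fun q hq b => ?_⟩
  have hfiber : colour ⁻¹' {some ⟨q, hq⟩} = {q} := by
    ext x
    by_cases hx : x ∈ F
    · simp [colour, hx]
    · simpa [colour, hx] using ne_of_mem_of_not_mem hq hx |>.symm
  rw [← mem_genContentK_singleton, ← hfiber, ← hw, hfiber, mem_wordContentK_singleton]

end ColouringCondition

theorem statement14_general (A : Type*) (k : ℕ)
    (C : (Fin k → A) → Set (Ultrafilter (Fin k → ℕ)))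
    (hC : ColouringCondition C)
    (p : Fin k → ℕ) (a : Fin k → A) :
    p ∈ Cont (C a) ↔ ∀ j, (fun _ => p j) ∈ Cont (C fun _ => a j) := by
  classical
  obtain ⟨w, hw⟩ := hC.exists_word_cont_iff
    (insert p (Finset.univ.image fun j (_ : Fin k) => p j))
  rw [hw p (Finset.mem_insert_self _ _), mem_contentK_iff_forall_const]
  refine forall_congr' fun j => (hw _ ?_ _).symm
  exact Finset.mem_insert_of_mem (Finset.mem_image_of_mem _ (Finset.mem_univ j))

/-- If `C` satisfies the colouring condition then, for every `p̄ ∈ ℕᵏ` and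
`ā ∈ Aᵏ`, `p̄ ∈ Cont(C_ā)` iff for every `j`, `(p_j,...,p_j) ∈ Cont(C_{(a_j,...,a_j)})`. -/
theorem statement14 (A : Type*) [Fintype A] [Nonempty A] (k : ℕ) (hk : 1 ≤ k)
    (C : (Fin k → A) → Set (Ultrafilter (Fin k → ℕ)))
    (hC : ColouringCondition C)
    (p : Fin k → ℕ) (a : Fin k → A) :
    p ∈ Cont (C a) ↔ ∀ j, (fun _ => p j) ∈ Cont (C fun _ => a j) :=
  statement14_general A k C hC p a

end Stmt14
end

section
/- Let A be a finite alphabet, k ≥ 1, and C = (C_ā)_{ā∈Aᵏ} a family of subsets of the space of ultrafilters on ℕᵏ satisfying the colouring condition. For a ∈ A set C_a^ℕ := {n ∈ ℕ : the constant tuple (n,...,n) belongs to Cont(C_{(a,...,a)})}. Then the sets C_a^ℕ (a ∈ A) are pairwise disjoint, their union is a downward closed subset of ℕ, and for every ā = (a₁,...,a_k) ∈ Aᵏ, Cont(C_ā) = {(p₁,...,p_k) ∈ ℕᵏ : ∀j, p_j ∈ C_{a_j}^ℕ}. -/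
/-!
Colouring `ℕᵏ` by the points of a finite set `F` together with the complement of `F`, the
colouring condition yields a single word `w` such that, for every `q ∈ F`, the principal
ultrafilter at `q` lies in `C_ā` exactly when `q` lies in the `ā`-content of `w`. So on any
finite set of tuples `Cont(C_ā)` is the `ā`-content of one word, and the three claims become
facts about words: `(n,…,n)` is in the `(a,…,a)`-content of `w` iff `w_n = a`, the positions
of a word form an initial segment of `ℕ`, and `(p₁,…,p_k)` is in the `ā`-content of `w` iff
each `(p_j,…,p_j)` is in the `(a_j,…,a_j)`-content.
-/

open Set

namespace Stmt15

variable {A : Type*} {k : ℕ}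

/-- `c_ā(w)`: the `ā`-content of a word `w`. -/
def contentK (a : Fin k → A) (w : List A) : Set (Fin k → ℕ) :=
  {i | ∀ j, ∃ h : i j < w.length, w.get ⟨i j, h⟩ = a j}

/-- `⟨w,Q⟩`: the content of a word `w` on `Q ⊆ ℕᵏ`. -/
def wordContentK (w : List A) (Q : Set (Fin k → ℕ)) : Set (Fin k → A) :=
  {a | (contentK a w ∩ Q).Nonempty}

/-- `⟨C,Q⟩`: the content of a generalized word `C` on `Q ⊆ ℕᵏ`. -/
def genContentK (C : (Fin k → A) → Set (Ultrafilter (Fin k → ℕ)))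
    (Q : Set (Fin k → ℕ)) : Set (Fin k → A) :=
  {a | ∃ α ∈ C a, Q ∈ α}

/-- `C` satisfies the colouring condition: for every finite colouring of `ℕᵏ` there
is a word with the same profile as `C`. -/
def ColouringCondition (C : (Fin k → A) → Set (Ultrafilter (Fin k → ℕ))) : Prop :=
  ∀ (l : ℕ), 1 ≤ l → ∀ Q : Fin l → Set (Fin k → ℕ),
    (Pairwise fun i j => Disjoint (Q i) (Q j)) → (⋃ i, Q i = Set.univ) →
    ∃ w : List A, ∀ i, wordContentK w (Q i) = genContentK C (Q i)

/-- `Cont(C)`: the content of a set of ultrafilters on `ℕᵏ`, i.e. the tuples whose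
principal ultrafilter lies in it. -/
def Cont (C : Set (Ultrafilter (Fin k → ℕ))) : Set (Fin k → ℕ) :=
  {i | (pure i : Ultrafilter (Fin k → ℕ)) ∈ C}

lemma mem_contentK_iff {a : Fin k → A} {w : List A} {i : Fin k → ℕ} :
    i ∈ contentK a w ↔ ∀ j, w[i j]? = some (a j) := by
  simp only [contentK, mem_ofPred_eq, List.getElem?_eq_some_iff, List.get_eq_getElem]

lemma const_mem_contentK_const_iff [Nonempty (Fin k)] {a : A} {w : List A} {n : ℕ} :
    (fun _ => n) ∈ contentK (fun _ : Fin k => a) w ↔ w[n]? = some a := by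
  rw [mem_contentK_iff, forall_const]

lemma mem_contentK_iff_forall_const_mem [Nonempty (Fin k)] {a : Fin k → A} {w : List A}
    {p : Fin k → ℕ} :
    p ∈ contentK a w ↔ ∀ j, (fun _ => p j) ∈ contentK (fun _ : Fin k => a j) w := by
  simp only [mem_contentK_iff, forall_const]

lemma wordContentK_singleton (w : List A) (q : Fin k → ℕ) :
    wordContentK w {q} = {a | q ∈ contentK a w} := by
  ext a
  exact inter_singleton_nonempty

lemma genContentK_singleton (C : (Fin k → A) → Set (Ultrafilter (Fin k → ℕ)))
    (q : Fin k → ℕ) : genContentK C {q} = {a | q ∈ Cont (C a)} := by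
  ext a
  refine ⟨?_, fun h => ⟨pure q, h, rfl⟩⟩
  rintro ⟨α, hα, hq⟩
  obtain ⟨_, rfl, rfl⟩ := Ultrafilter.eq_pure_of_finite_mem (finite_singleton q) hq
  exact hα

section

variable {C : (Fin k → A) → Set (Ultrafilter (Fin k → ℕ))}

lemma ColouringCondition.exists_word_of_fintype (hC : ColouringCondition C)
    {ι : Type*} [Fintype ι] [Nonempty ι] (Q : ι → Set (Fin k → ℕ))
    (hdisj : Pairwise fun i j => Disjoint (Q i) (Q j)) (hunion : ⋃ i, Q i = univ) :
    ∃ w : List A, ∀ i, wordContentK w (Q i) = genContentK C (Q i) := by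
  let e := Fintype.equivFin ι
  obtain ⟨w, hw⟩ := hC _ Fintype.card_pos (Q ∘ e.symm)
    (hdisj.comp_of_injective e.symm.injective)
    (by rwa [Function.comp_def, e.symm.surjective.iUnion_comp])
  exact ⟨w, fun i => by simpa using hw (e i)⟩

lemma ColouringCondition.exists_word_cont_eq_contentK (hC : ColouringCondition C)
    (F : Finset (Fin k → ℕ)) :
    ∃ w : List A, ∀ q ∈ F, ∀ a, q ∈ Cont (C a) ↔ q ∈ contentK a w := by
  let Q : Option F → Set (Fin k → ℕ) := fun o => o.elim (↑F)ᶜ fun q => {q.1}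
  have hdisj : Pairwise fun i j => Disjoint (Q i) (Q j) := by
    rintro (_ | ⟨q, hq⟩) (_ | ⟨r, hr⟩) hne <;> simp_all [Q]
  have hunion : ⋃ i, Q i = univ := by
    refine eq_univ_of_forall fun q => ?_
    by_cases hq : q ∈ F
    · exact mem_iUnion.2 ⟨some ⟨q, hq⟩, rfl⟩
    · exact mem_iUnion.2 ⟨none, hq⟩
  obtain ⟨w, hw⟩ := hC.exists_word_of_fintype Q hdisj hunion
  refine ⟨w, fun q hq a => ?_⟩
  have := hw (some ⟨q, hq⟩)
  simp only [Q, Option.elim_some, wordContentK_singleton, genContentK_singleton] at this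
  exact (Set.ext_iff.1 this a).symm

/-- `C_a^ℕ`. -/
def diagCont (C : (Fin k → A) → Set (Ultrafilter (Fin k → ℕ))) (a : A) : Set ℕ :=
  {n | (fun _ => n) ∈ Cont (C fun _ => a)}

lemma ColouringCondition.exists_word_diagCont (hC : ColouringCondition C) [Nonempty (Fin k)]
    (F : Finset (Fin k → ℕ)) :
    ∃ w : List A, (∀ q ∈ F, ∀ a, q ∈ Cont (C a) ↔ q ∈ contentK a w) ∧
      ∀ n, (fun _ => n) ∈ F → ∀ a, n ∈ diagCont C a ↔ w[n]? = some a := by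
  obtain ⟨w, hw⟩ := hC.exists_word_cont_eq_contentK F
  exact ⟨w, hw, fun n hn a => (hw _ hn _).trans const_mem_contentK_const_iff⟩

variable [Nonempty (Fin k)]

lemma ColouringCondition.pairwise_disjoint_diagCont (hC : ColouringCondition C) :
    Pairwise fun a b : A => Disjoint (diagCont C a) (diagCont C b) := by
  refine fun a b hab => disjoint_left.2 fun n ha hb => hab ?_
  obtain ⟨w, -, hw⟩ := hC.exists_word_diagCont {fun _ => n}
  have hn := Finset.mem_singleton_self (fun _ : Fin k => n)
  exact Option.some_injective _ (((hw n hn a).1 ha).symm.trans ((hw n hn b).1 hb))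

lemma ColouringCondition.mem_iUnion_diagCont_of_lt (hC : ColouringCondition C) {n m : ℕ}
    (hn : n ∈ ⋃ a : A, diagCont C a) (hmn : m < n) : m ∈ ⋃ a : A, diagCont C a := by
  obtain ⟨a, ha⟩ := mem_iUnion.1 hn
  obtain ⟨w, -, hw⟩ := hC.exists_word_diagCont {fun _ => n, fun _ => m}
  have hnw : n < w.length := (List.getElem?_eq_some_iff.1 ((hw n (by simp) a).1 ha)).1
  have hmw : m < w.length := hmn.trans hnw
  exact mem_iUnion.2 ⟨w[m], (hw m (by simp) _).2 (List.getElem?_eq_getElem hmw)⟩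

lemma ColouringCondition.cont_eq_pi_diagCont (hC : ColouringCondition C) (a : Fin k → A) :
    Cont (C a) = {p | ∀ j, p j ∈ diagCont C (a j)} := by
  ext p
  obtain ⟨w, hw, -⟩ := hC.exists_word_diagCont (insert p (Finset.univ.image fun j _ => p j))
  rw [hw p (Finset.mem_insert_self _ _), mem_contentK_iff_forall_const_mem]
  refine forall_congr' fun j => (hw _ ?_ _).symm
  exact Finset.mem_insert_of_mem (Finset.mem_image_of_mem _ (Finset.mem_univ j))

end

theorem statement15_general (A : Type*) (k : ℕ) (hk : 1 ≤ k)
    (C : (Fin k → A) → Set (Ultrafilter (Fin k → ℕ)))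
    (hC : ColouringCondition C) :
    (Pairwise fun a b : A =>
        Disjoint {n : ℕ | (fun _ => n) ∈ Cont (C fun _ => a)}
          {n : ℕ | (fun _ => n) ∈ Cont (C fun _ => b)}) ∧
    (∀ n m : ℕ, n ∈ (⋃ a : A, {n : ℕ | (fun _ => n) ∈ Cont (C fun _ => a)}) →
        m < n → m ∈ ⋃ a : A, {n : ℕ | (fun _ => n) ∈ Cont (C fun _ => a)}) ∧
    (∀ a : Fin k → A,
        Cont (C a) = {p : Fin k → ℕ |
          ∀ j, p j ∈ {n : ℕ | (fun _ => n) ∈ Cont (C fun _ => a j)}}) := by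
  have : Nonempty (Fin k) := ⟨⟨0, hk⟩⟩
  exact ⟨hC.pairwise_disjoint_diagCont, fun _ _ => hC.mem_iUnion_diagCont_of_lt,
    hC.cont_eq_pi_diagCont⟩

/-- For `C` satisfying the colouring condition, the sets
`C_a^ℕ := {n : (n,...,n) ∈ Cont(C_{(a,...,a)})}` are pairwise disjoint, their union is
downward closed, and `Cont(C_ā)` is the product of the `C_{a_j}^ℕ`. -/
theorem statement15 (A : Type*) [Fintype A] [Nonempty A] (k : ℕ) (hk : 1 ≤ k)
    (C : (Fin k → A) → Set (Ultrafilter (Fin k → ℕ)))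
    (hC : ColouringCondition C) :
    (Pairwise fun a b : A =>
        Disjoint {n : ℕ | (fun _ => n) ∈ Cont (C fun _ => a)}
          {n : ℕ | (fun _ => n) ∈ Cont (C fun _ => b)}) ∧
    (∀ n m : ℕ, n ∈ (⋃ a : A, {n : ℕ | (fun _ => n) ∈ Cont (C fun _ => a)}) →
        m < n → m ∈ ⋃ a : A, {n : ℕ | (fun _ => n) ∈ Cont (C fun _ => a)}) ∧
    (∀ a : Fin k → A,
        Cont (C a) = {p : Fin k → ℕ |
          ∀ j, p j ∈ {n : ℕ | (fun _ => n) ∈ Cont (C fun _ => a j)}}) :=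
  statement15_general A k hk C hC

end Stmt15
end

section
/- Let A be a finite alphabet. For all letters a, b, d ∈ A, every subset Q ⊆ ℕ, and every ultrafilter ν on A*⊗ℕ² with Ultrafilter.map π₁ ν = Ultrafilter.map π₂ ν, one has f_{a,b}⁻¹(L_{□^d_Q}) ∈ ν if and only if f_{b,a}⁻¹(L_{□^d_Q}) ∈ ν. -/
open Set

namespace Stmt16

variable {A : Type*}

/-- `c_a(w)`: the set of positions of the word `w` carrying the letter `a`. -/
def contentSet (a : A) (w : List A) : Set ℕ :=
  {i | ∃ h : i < w.length, w.get ⟨i, h⟩ = a}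

/-- `L_{□^d_Q}`. -/
def boxLang (d : A) (Q : Set ℕ) : Set (List A) :=
  {w | contentSet d w ⊆ Q}

/-- `A* ⊗ ℕ²`. -/
abbrev Dom2 (A : Type*) : Type _ :=
  {x : List A × ℕ × ℕ // x.2.1 < x.1.length ∧ x.2.2 < x.1.length}

/-- `f_{a,b}(w,j₁,j₂) = w(j₁→a)(j₂→b)` if `j₁ ≠ j₂`, and `w` otherwise. -/
def f2 (a b : A) : Dom2 A → List A := fun x =>
  if x.1.2.1 ≠ x.1.2.2 then (x.1.1.set x.1.2.1 a).set x.1.2.2 b else x.1.1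

/-!
Off the diagonal (`j₁ ≠ j₂`), the word `f_{a,b}(w, j₁, j₂)` lies in `L_{□^d_Q}` iff the positions
other than `j₁, j₂` satisfy a condition symmetric in `j₁, j₂`, and moreover `a = d → j₁ ∈ Q` and
`b = d → j₂ ∈ Q`. As `π₁` and `π₂` push `ν` to the same ultrafilter, `j₁ ∈ Q` holds `ν`-almost
surely iff `j₂ ∈ Q` does, so exchanging `a` and `b` does not matter. On the diagonal both
`f_{a,b}` and `f_{b,a}` return the word unchanged.
-/

open Filter

lemma mem_contentSet_set (d a : A) (w : List A) (i j : ℕ) :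
    i ∈ contentSet d (w.set j a) ↔
      (i = j ∧ j < w.length ∧ a = d) ∨ (i ≠ j ∧ i ∈ contentSet d w) := by
  simp only [contentSet, mem_ofPred_eq, List.get_eq_getElem, List.getElem_set, List.length_set]
  by_cases hij : i = j
  · subst hij; simp
  · simp [hij, Ne.symm hij]

lemma set_set_mem_boxLang_iff {w : List A} {j₁ j₂ : ℕ} (h₁ : j₁ < w.length)
    (h₂ : j₂ < w.length) (hne : j₁ ≠ j₂) (a b d : A) (Q : Set ℕ) :
    (w.set j₁ a).set j₂ b ∈ boxLang d Q ↔
      (∀ i ∈ contentSet d w, i ≠ j₁ → i ≠ j₂ → i ∈ Q) ∧ (a = d → j₁ ∈ Q) ∧ (b = d → j₂ ∈ Q) := by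
  simp only [boxLang, mem_ofPred_eq, subset_def, mem_contentSet_set, List.length_set]
  constructor
  · intro H
    exact ⟨fun i hi hi₁ hi₂ => H i (.inr ⟨hi₂, .inr ⟨hi₁, hi⟩⟩),
      fun ha => H j₁ (.inr ⟨hne, .inl ⟨rfl, h₁, ha⟩⟩), fun hb => H j₂ (.inl ⟨rfl, h₂, hb⟩)⟩
  · rintro ⟨H, Ha, Hb⟩ i (⟨rfl, -, hb⟩ | ⟨hi₂, ⟨rfl, -, ha⟩ | ⟨hi₁, hi⟩⟩)
    exacts [Hb hb, Ha ha, H i hi hi₁ hi₂]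

lemma f2_of_eq (a b : A) {x : Dom2 A} (h : x.1.2.1 = x.1.2.2) : f2 a b x = x.1.1 := by
  simp [f2, h]

lemma f2_mem_boxLang_iff (a b d : A) (Q : Set ℕ) {x : Dom2 A} (hne : x.1.2.1 ≠ x.1.2.2) :
    f2 a b x ∈ boxLang d Q ↔
      (∀ i ∈ contentSet d x.1.1, i ≠ x.1.2.1 → i ≠ x.1.2.2 → i ∈ Q) ∧
        (a = d → x.1.2.1 ∈ Q) ∧ (b = d → x.1.2.2 ∈ Q) := by
  rw [f2, if_pos hne]
  exact set_set_mem_boxLang_iff x.2.1 x.2.2 hne a b d Q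

lemma eventually_f2_mem_boxLang_iff {l : Filter (Dom2 A)}
    (hoff : ∀ᶠ x in l, x.1.2.1 ≠ x.1.2.2) (a b d : A) (Q : Set ℕ) :
    (∀ᶠ x in l, f2 a b x ∈ boxLang d Q) ↔
      (∀ᶠ x in l, ∀ i ∈ contentSet d x.1.1, i ≠ x.1.2.1 → i ≠ x.1.2.2 → i ∈ Q) ∧
        (a = d → ∀ᶠ x in l, x.1.2.1 ∈ Q) ∧ (b = d → ∀ᶠ x in l, x.1.2.2 ∈ Q) := by
  rw [← eventually_imp_distrib_left, ← eventually_imp_distrib_left, ← eventually_and,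
    ← eventually_and]
  exact eventually_congr (hoff.mono fun x hx => f2_mem_boxLang_iff a b d Q hx)

theorem statement16_general (A : Type*) (a b d : A) (Q : Set ℕ)
    (ν : Ultrafilter (Dom2 A))
    (hν : Ultrafilter.map (fun x => x.1.2.1) ν =
      Ultrafilter.map (fun x => x.1.2.2) ν) :
    f2 a b ⁻¹' boxLang d Q ∈ ν ↔ f2 b a ⁻¹' boxLang d Q ∈ ν := by
  change (∀ᶠ x in (ν : Filter (Dom2 A)), _) ↔ ∀ᶠ x in (ν : Filter (Dom2 A)), _
  by_cases hdiag : ∀ᶠ x in (ν : Filter (Dom2 A)), x.1.2.1 = x.1.2.2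
  · have hswap : f2 a b =ᶠ[ν] f2 b a :=
      hdiag.mono fun x hx => (f2_of_eq a b hx).trans (f2_of_eq b a hx).symm
    exact eventually_congr (hswap.mono fun x hx => by rw [hx])
  · have hoff : ∀ᶠ x in (ν : Filter (Dom2 A)), x.1.2.1 ≠ x.1.2.2 :=
      Ultrafilter.eventually_not.2 hdiag
    have hproj : (∀ᶠ x in (ν : Filter (Dom2 A)), x.1.2.1 ∈ Q) ↔
        ∀ᶠ x in (ν : Filter (Dom2 A)), x.1.2.2 ∈ Q :=
      iff_of_eq (congrArg (Q ∈ ·) hν)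
    rw [eventually_f2_mem_boxLang_iff hoff, eventually_f2_mem_boxLang_iff hoff, hproj]
    tauto

/-- Soundness check: for every `a, b, d ∈ A`, `Q ⊆ ℕ` and every ultrafilter `ν` on
`A* ⊗ ℕ²` with equal pushforwards along the two projections,
`f_{a,b}⁻¹(L_{□^d_Q}) ∈ ν` iff `f_{b,a}⁻¹(L_{□^d_Q}) ∈ ν`. -/
theorem statement16 (A : Type*) [Fintype A] [Nonempty A] (a b d : A) (Q : Set ℕ)
    (ν : Ultrafilter (Dom2 A))
    (hν : Ultrafilter.map (fun x => x.1.2.1) ν =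
      Ultrafilter.map (fun x => x.1.2.2) ν) :
    f2 a b ⁻¹' boxLang d Q ∈ ν ↔ f2 b a ⁻¹' boxLang d Q ∈ ν :=
  statement16_general A a b d Q ν hν

end Stmt16
end
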